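/- arXiv:2502.01149 — 7 statements merged into one kernel-verified Lean document; each statement's English description precedes it below -/
import Mathlib

section
/- Let V be a finite-dimensional real vector space equipped with a nondegenerate quadratic form q of signature (1, m), and let h be a unipotent isometry of (V, q) with h ≠ id. Then (h − id)³ = 0 and (h − id)² ≠ 0; moreover there exists an h-invariant linear subspace W ⊆ V of dimension 3 such that h restricts to the identity on the q-orthogonal complement of W, and the image of (h − id)² is a q-isotropic line that is fixed pointwise by h. -/
open Module

section Aux

variable {V : Type*} [AddCommGroup V] [Module ℝ V] [FiniteDimensional ℝ V]

/-- Expansion of the polar form in an orthogonal basis. -/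
theorem aux_polar_sum (m : ℕ) (q : QuadraticForm ℝ V) (b : Basis (Fin (m + 1)) ℝ V)
    (horth : ∀ i j, i ≠ j → QuadraticMap.polar q (b i) (b j) = 0) (v u : V) :
    QuadraticMap.polar q v u = ∑ i, b.repr v i * b.repr u i * (2 * q (b i)) := by
  have key : QuadraticMap.polar q v u = QuadraticMap.polarBilin q v u := rfl
  rw [key]
  conv_lhs => rw [← b.sum_repr v, ← b.sum_repr u]
  simp only [map_sum, LinearMap.map_smul₂, LinearMap.sum_apply, LinearMap.map_smul,
    LinearMap.smul_apply, QuadraticMap.polarBilin_apply_apply, smul_eq_mul]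
  rw [Finset.sum_comm]
  refine Finset.sum_congr rfl fun i _ => ?_
  rw [Finset.sum_eq_single i]
  · rw [QuadraticMap.polar_self]; ring
  · intro j _ hj
    rw [horth i j (Ne.symm hj)]; ring
  · intro hhh; exact absurd (Finset.mem_univ i) hhh

end Aux

/-- Let `V` be a real vector space with a nondegenerate quadratic form `q`
of signature `(1, m)` and let `h ≠ id` be a unipotent isometry of `(V, q)`.  Then
`(h - id)³ = 0`, `(h - id)² ≠ 0`, there is an `h`-invariant subspace `W` of dimension `3`
such that `h` is the identity on the `q`-orthogonal complement of `W`, and the image of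
`(h - id)²` is a `q`-isotropic line fixed pointwise by `h`. -/
theorem unipotent_isometry_structure
    {V : Type*} [AddCommGroup V] [Module ℝ V] [FiniteDimensional ℝ V]
    (m : ℕ) (q : QuadraticForm ℝ V)
    (b : Basis (Fin (m + 1)) ℝ V)
    (horth : ∀ i j, i ≠ j → QuadraticMap.polar q (b i) (b j) = 0)
    (hpos : 0 < q (b 0))
    (hneg : ∀ i : Fin (m + 1), i ≠ 0 → q (b i) < 0)
    (h : V →ₗ[ℝ] V) (hbij : Function.Bijective h)
    (hiso : ∀ v, q (h v) = q v)
    (hunip : (h - 1) ^ (finrank ℝ V) = 0)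
    (hne : h ≠ 1) :
    (h - 1) ^ 3 = 0 ∧ (h - 1) ^ 2 ≠ 0 ∧
    (∃ W : Submodule ℝ V,
      (∀ x ∈ W, h x ∈ W) ∧
      finrank ℝ W = 3 ∧
      (∀ v : V, (∀ w ∈ W, QuadraticMap.polar q v w = 0) → h v = v)) ∧
    finrank ℝ (LinearMap.range ((h - 1) ^ 2)) = 1 ∧
    (∀ v ∈ LinearMap.range ((h - 1) ^ 2), q v = 0 ∧ h v = v) := by
  classical
  set N : V →ₗ[ℝ] V := h - 1 with hNdef
  have hNapp : ∀ x : V, N x = h x - x := by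
    intro x; simp [hNdef, LinearMap.sub_apply]
  have hhx : ∀ x : V, h x = x + N x := by
    intro x; rw [hNapp]; abel
  -- the inverse of h
  set E : V ≃ₗ[ℝ] V := LinearEquiv.ofBijective h hbij with hEdef
  set g : V →ₗ[ℝ] V := (E.symm : V →ₗ[ℝ] V) with hgdef
  have hEapp : ∀ x : V, E x = h x := fun x => rfl
  have hgh : ∀ x : V, g (h x) = x := by
    intro x
    have : g (E x) = x := E.symm_apply_apply x
    rwa [hEapp] at this
  have hhg : ∀ x : V, h (g x) = x := by
    intro x
    have : E (E.symm x) = x := E.apply_symm_apply x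
    rwa [hEapp] at this
  -- polar form basics
  have hBsum : ∀ v u : V, QuadraticMap.polar q v u
      = ∑ i, b.repr v i * b.repr u i * (2 * q (b i)) := aux_polar_sum m q b horth
  have hBcomm : ∀ v u : V, QuadraticMap.polar q v u = QuadraticMap.polar q u v :=
    fun v u => QuadraticMap.polar_comm (⇑q) v u
  have hqB : ∀ v : V, 2 * q v = QuadraticMap.polar q v v := by
    intro v; rw [QuadraticMap.polar_self]; simp [two_smul]; ring
  have hBh : ∀ x y : V, QuadraticMap.polar q (h x) (h y) = QuadraticMap.polar q x y := by
    intro x y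
    simp only [QuadraticMap.polar, ← map_add h, hiso]
  have hBh1 : ∀ x y : V, QuadraticMap.polar q (h x) y = QuadraticMap.polar q x (g y) := by
    intro x y
    conv_lhs => rw [← hhg y]
    exact hBh x (g y)
  have hNg : ∀ x : V, N (g x) = g (N x) := by
    intro x
    rw [hNapp, hhg, hNapp, map_sub, hgh]
  -- adjoint identity
  have hadj : ∀ x y : V, QuadraticMap.polar q (N x) y = - QuadraticMap.polar q x (g (N y)) := by
    intro x y
    rw [hNapp x, QuadraticMap.polar_sub_left, hBh1]
    have hg1 : g (N y) = y - g y := by rw [hNapp, map_sub, hgh]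
    rw [hg1, QuadraticMap.polar_sub_right]
    ring
  have hNcomm : ∀ (c : ℕ) (z : V), N ((g ^ c) z) = (g ^ c) (N z) := by
    intro c
    induction c with
    | zero => intro z; simp
    | succ c ihc =>
      intro z
      rw [pow_succ, Module.End.mul_apply, Module.End.mul_apply, ihc (g z), hNg]
  -- iterated adjoint identity
  have hadj_pow : ∀ (a : ℕ) (x y : V), QuadraticMap.polar q ((N ^ a) x) y
      = (-1 : ℝ) ^ a * QuadraticMap.polar q x ((g ^ a) ((N ^ a) y)) := by
    intro a
    induction a with
    | zero => intro x y; simp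
    | succ a ih =>
      intro x y
      have h1 : (N ^ (a + 1)) x = (N ^ a) (N x) := by
        rw [pow_succ, Module.End.mul_apply]
      rw [h1, ih (N x) y, hadj x]
      have h2 : g (N ((g ^ a) ((N ^ a) y))) = (g ^ (a + 1)) ((N ^ (a + 1)) y) := by
        rw [hNcomm a,
          show N ((N ^ a) y) = (N ^ (a + 1)) y from by rw [pow_succ', Module.End.mul_apply],
          show (g ^ (a + 1)) ((N ^ (a + 1)) y) = g ((g ^ a) ((N ^ (a + 1)) y)) from by
            rw [pow_succ', Module.End.mul_apply]]
      rw [h2]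
      ring
  -- vanishing of polar pairings between high powers of N
  have hperp : ∀ (a a' : ℕ) (x y : V), N ^ (a + a') = 0 →
      QuadraticMap.polar q ((N ^ a) x) ((N ^ a') y) = 0 := by
    intro a a' x y hc
    rw [hadj_pow a x]
    have : (N ^ a) ((N ^ a') y) = 0 := by
      have : (N ^ a) ((N ^ a') y) = (N ^ (a + a')) y := by
        rw [pow_add, Module.End.mul_apply]
      rw [this, hc, LinearMap.zero_apply]
    rw [this, map_zero, QuadraticMap.polar_zero_right, mul_zero]
  -- signs of the diagonal entries
  have hcne : ∀ i : Fin (m + 1), q (b i) ≠ 0 := by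
    intro i
    by_cases hi : i = 0
    · subst hi; exact ne_of_gt hpos
    · exact ne_of_lt (hneg i hi)
  -- Lorentz lemma 1 : an isotropic vector with vanishing 0-coordinate is zero
  have hL1 : ∀ u : V, q u = 0 → b.repr u 0 = 0 → u = 0 := by
    intro u hq h0
    have hsum : ∑ i, b.repr u i * b.repr u i * (2 * q (b i)) = 0 := by
      rw [← hBsum u u, ← hqB u, hq, mul_zero]
    have hterm : ∀ i ∈ Finset.univ, b.repr u i * b.repr u i * (2 * q (b i)) ≤ 0 := by
      intro i _
      by_cases hi : i = 0
      · subst hi; rw [h0]; simp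
      · have h1 : 0 ≤ b.repr u i * b.repr u i := mul_self_nonneg _
        have h2 : 2 * q (b i) ≤ 0 := by nlinarith [hneg i hi]
        exact mul_nonpos_of_nonneg_of_nonpos h1 h2
    have hzero := (Finset.sum_eq_zero_iff_of_nonpos hterm).mp hsum
    have hrepr : ∀ i, b.repr u i = 0 := by
      intro i
      by_cases hi : i = 0
      · subst hi; exact h0
      · have := hzero i (Finset.mem_univ i)
        have h2 : (2 : ℝ) * q (b i) ≠ 0 := by
          intro hcontra
          exact hcne i (by linarith [mul_eq_zero.mp hcontra |>.resolve_left (by norm_num)])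
        have h3 : b.repr u i * b.repr u i = 0 := by
          rcases mul_eq_zero.mp this with h | h
          · exact h
          · exact absurd h h2
        exact mul_self_eq_zero.mp h3
    exact b.ext_elem (by simp [hrepr])
  -- Lorentz lemma 2 : two orthogonal isotropic vectors are proportional
  have hL2 : ∀ u w : V, q u = 0 → q w = 0 → QuadraticMap.polar q u w = 0 →
      b.repr w 0 • u = b.repr u 0 • w := by
    intro u w hqu hqw hB
    have hu2 : QuadraticMap.polar q u u = 2 * q u := (hqB u).symm
    have hw2 : QuadraticMap.polar q w w = 2 * q w := (hqB w).symm
    have hc : QuadraticMap.polar q w u = QuadraticMap.polar q u w := hBcomm w u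
    have hqz : q (b.repr w 0 • u - b.repr u 0 • w) = 0 := by
      have h2 : 2 * q (b.repr w 0 • u - b.repr u 0 • w) = 0 := by
        rw [hqB]
        simp only [QuadraticMap.polar_sub_left, QuadraticMap.polar_sub_right,
          QuadraticMap.polar_smul_left, QuadraticMap.polar_smul_right, smul_eq_mul]
        rw [hu2, hw2, hc, hqu, hqw, hB]
        ring
      linarith
    have hz0 : b.repr (b.repr w 0 • u - b.repr u 0 • w) 0 = 0 := by
      simp only [map_sub, map_smul, Finsupp.sub_apply, Finsupp.smul_apply, smul_eq_mul]
      ring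
    exact sub_eq_zero.mp (hL1 _ hqz hz0)
  -- nondegeneracy of the polar form
  have hnd : ∀ v : V, (∀ y : V, QuadraticMap.polar q v y = 0) → v = 0 := by
    intro v hv
    refine b.ext_elem fun j => ?_
    have := hv (b j)
    rw [hBsum v (b j)] at this
    rw [Finset.sum_eq_single j] at this
    · simp only [Basis.repr_self, Finsupp.single_apply, eq_self_iff_true, if_true,
        mul_one] at this
      have h2 : (2 : ℝ) * q (b j) ≠ 0 := by
        intro hcon
        rcases mul_eq_zero.mp hcon with hc | hc
        · norm_num at hc
        · exact hcne j hc
      simp only [map_zero, Finsupp.zero_apply]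
      rcases mul_eq_zero.mp this with hc | hc
      · exact hc
      · exact absurd hc h2
    · intro i _ hij
      simp only [Basis.repr_self, Finsupp.single_apply, if_neg (Ne.symm hij)]
      ring
    · intro hj; exact absurd (Finset.mem_univ j) hj
  -- N is nonzero
  have hNne : N ≠ 0 := by
    intro h0
    exact hne (by rwa [sub_eq_zero] at h0)
  -- q-isotropy on ker N ∩ im N
  have hKB : ∀ x y : V, N (N y) = 0 → QuadraticMap.polar q (N x) (N y) = 0 := by
    intro x y hy
    rw [hadj x (N y), hy, map_zero, QuadraticMap.polar_zero_right, neg_zero]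
  have hK : ∀ x : V, N (N x) = 0 → q (N x) = 0 := by
    intro x hx
    have := hKB x x hx
    rw [← hqB (N x)] at this
    linarith
  -- `(h - 1) ^ 3 = 0`
  have hN3 : N ^ 3 = 0 := by
    by_contra hne3
    have hex : ∃ k, N ^ k = 0 := ⟨finrank ℝ V, hunip⟩
    have hk0 : N ^ Nat.find hex = 0 := Nat.find_spec hex
    set k := Nat.find hex with hkdef
    have hkgt : 4 ≤ k := by
      by_contra hlt
      push_neg at hlt
      refine hne3 ?_
      calc N ^ 3 = N ^ (3 - k) * N ^ k := by rw [← pow_add]; congr 1; omega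
      _ = 0 := by rw [hk0, mul_zero]
    have hjne : N ^ (k - 1) ≠ 0 := Nat.find_min hex (by omega)
    have hbig : ∀ a : ℕ, k ≤ a → N ^ a = 0 := by
      intro a ha
      calc N ^ a = N ^ (a - k) * N ^ k := by rw [← pow_add]; congr 1; omega
      _ = 0 := by rw [hk0, mul_zero]
    obtain ⟨e, he⟩ : ∃ e : V, (N ^ (k - 1)) e ≠ 0 := by
      by_contra hcon
      push_neg at hcon
      exact hjne (LinearMap.ext fun x => by rw [hcon x, LinearMap.zero_apply])
    have hqw : q ((N ^ (k - 1)) e) = 0 := by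
      have := hperp (k - 1) (k - 1) e e (hbig _ (by omega))
      rw [← hqB] at this; linarith
    have hqu : q ((N ^ (k - 2)) e) = 0 := by
      have := hperp (k - 2) (k - 2) e e (hbig _ (by omega))
      rw [← hqB] at this; linarith
    have hBuw : QuadraticMap.polar q ((N ^ (k - 2)) e) ((N ^ (k - 1)) e) = 0 :=
      hperp (k - 2) (k - 1) e e (hbig _ (by omega))
    have hw0 : b.repr ((N ^ (k - 1)) e) 0 ≠ 0 := fun h0 => he (hL1 _ hqw h0)
    have hprop := hL2 _ _ hqu hqw hBuw
    have hNprop := congrArg N hprop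
    rw [map_smul, map_smul] at hNprop
    have hstep : ∀ (a : ℕ) (x : V), N ((N ^ a) x) = (N ^ (a + 1)) x := fun a x => by
      rw [pow_succ', Module.End.mul_apply]
    have hNu : N ((N ^ (k - 2)) e) = (N ^ (k - 1)) e := by
      rw [hstep, show k - 2 + 1 = k - 1 by omega]
    have hNw : N ((N ^ (k - 1)) e) = 0 := by
      rw [hstep, show k - 1 + 1 = k by omega, hk0, LinearMap.zero_apply]
    rw [hNu, hNw, smul_zero] at hNprop
    exact he (by simpa [smul_eq_zero, hw0] using hNprop)
  have hstep : ∀ (a : ℕ) (x : V), N ((N ^ a) x) = (N ^ (a + 1)) x := fun a x => by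
    rw [pow_succ', Module.End.mul_apply]
  have hsq : ∀ x : V, N (N x) = (N ^ 2) x := fun x => by
    rw [pow_two, Module.End.mul_apply]
  -- `(h - 1) ^ 2 ≠ 0`
  have hN2 : N ^ 2 ≠ 0 := by
    intro h2
    obtain ⟨e, he⟩ : ∃ e : V, N e ≠ 0 := by
      by_contra hcon
      push_neg at hcon
      exact hNne (LinearMap.ext fun x => by rw [hcon x, LinearMap.zero_apply])
    have hNN : ∀ x : V, N (N x) = 0 := fun x => by
      rw [hsq, h2, LinearMap.zero_apply]
    have hqim : ∀ x : V, q (N x) = 0 := fun x => hK x (hNN x)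
    have hBim : ∀ x y : V, QuadraticMap.polar q (N x) (N y) = 0 := fun x y => hKB x y (hNN y)
    have hw0 : b.repr (N e) 0 ≠ 0 := fun h0 => he (hL1 _ (hqim e) h0)
    have hprop : ∀ x : V, b.repr (N e) 0 • N x = b.repr (N x) 0 • N e := fun x =>
      hL2 (N x) (N e) (hqim x) (hqim e) (hBim x e)
    -- the isometry condition forces `polar q x (N x) = 0`
    have hBxNx : ∀ x : V, QuadraticMap.polar q x (N x) = 0 := by
      intro x
      have hq1 : q (h x) = q x := hiso x
      rw [hhx x] at hq1
      have hexp : q (x + N x) = q x + q (N x) + QuadraticMap.polar q x (N x) := by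
        simp only [QuadraticMap.polar]
        ring
      rw [hexp, hqim x] at hq1
      linarith
    -- a product of two linear functionals vanishes identically
    have hkey : ∀ x : V, b.repr (N x) 0 * QuadraticMap.polar q x (N e) = 0 := by
      intro x
      have h1 : QuadraticMap.polar q x (b.repr (N e) 0 • N x)
          = QuadraticMap.polar q x (b.repr (N x) 0 • N e) := by rw [hprop x]
      rw [QuadraticMap.polar_smul_right, QuadraticMap.polar_smul_right, hBxNx x,
        smul_zero, smul_eq_mul] at h1
      exact h1.symm
    obtain ⟨y, hy⟩ : ∃ y : V, QuadraticMap.polar q (N e) y ≠ 0 := by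
      by_contra hcon
      push_neg at hcon
      exact he (hnd (N e) hcon)
    have hye : QuadraticMap.polar q y (N e) ≠ 0 := by rwa [← hBcomm (N e) y]
    have hpe : QuadraticMap.polar q e (N e) = 0 := by
      have := hkey e
      rcases mul_eq_zero.mp this with hc | hc
      · exact absurd hc hw0
      · exact hc
    have hfy : b.repr (N y) 0 = 0 := by
      rcases mul_eq_zero.mp (hkey y) with hc | hc
      · exact hc
      · exact absurd hc hye
    have := hkey (e + y)
    rw [map_add, map_add, Finsupp.add_apply, hfy, add_zero,
      QuadraticMap.polar_add_left, hpe, zero_add] at this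
    rcases mul_eq_zero.mp this with hc | hc
    · exact hw0 hc
    · exact hye hc
  -- now the main construction
  obtain ⟨e, he⟩ : ∃ e : V, (N ^ 2) e ≠ 0 := by
    by_contra hcon
    push_neg at hcon
    exact hN2 (LinearMap.ext fun x => by rw [hcon x, LinearMap.zero_apply])
  have hN3app : ∀ x : V, N ((N ^ 2) x) = 0 := fun x => by
    rw [hstep, hN3, LinearMap.zero_apply]
  have hNw : N ((N ^ 2) e) = 0 := hN3app e
  have hNNe : N (N (N e)) = 0 := by rw [hsq e]; exact hN3app e
  have hw_eq : N (N e) = (N ^ 2) e := hsq e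
  have hqw : q ((N ^ 2) e) = 0 := by
    have := hK (N e) hNNe
    rwa [hw_eq] at this
  have hw0 : b.repr ((N ^ 2) e) 0 ≠ 0 := fun h0 => he (hL1 _ hqw h0)
  -- every element of ker N ∩ im N is a multiple of w
  have hker_im : ∀ x : V, N (N x) = 0 → ∃ c : ℝ, N x = c • (N ^ 2) e := by
    intro x hx
    have h1 : QuadraticMap.polar q (N x) ((N ^ 2) e) = 0 := by
      have := hKB x (N e) hNNe
      rwa [hw_eq] at this
    have h2 := hL2 (N x) ((N ^ 2) e) (hK x hx) hqw h1
    refine ⟨(b.repr ((N ^ 2) e) 0)⁻¹ * b.repr (N x) 0, ?_⟩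
    have h3 : (b.repr ((N ^ 2) e) 0)⁻¹ • (b.repr ((N ^ 2) e) 0 • N x)
        = (b.repr ((N ^ 2) e) 0)⁻¹ • (b.repr (N x) 0 • (N ^ 2) e) := by rw [h2]
    rwa [smul_smul, smul_smul, inv_mul_cancel₀ hw0, one_smul] at h3
  have him2 : ∀ x : V, ∃ c : ℝ, (N ^ 2) x = c • (N ^ 2) e := by
    intro x
    obtain ⟨c, hc⟩ := hker_im (N x) (by rw [hsq]; exact hN3app x)
    exact ⟨c, by rw [← hsq]; exact hc⟩
  have himN : ∀ x : V, ∃ c d : ℝ, N x = c • N e + d • (N ^ 2) e := by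
    intro x
    obtain ⟨c, hc⟩ := him2 x
    have hx' : N (N (x - c • e)) = 0 := by
      rw [map_sub, map_smul, map_sub, map_smul, hsq, hsq, hc]
      exact sub_self _
    obtain ⟨d, hd⟩ := hker_im (x - c • e) hx'
    rw [map_sub, map_smul, sub_eq_iff_eq_add] at hd
    exact ⟨c, d, by rw [hd]; abel⟩
  have hmem_e : e ∈ ({e, N e, (N ^ 2) e} : Set V) := by simp
  have hmem_Ne : N e ∈ ({e, N e, (N ^ 2) e} : Set V) := by simp
  have hmem_w : (N ^ 2) e ∈ ({e, N e, (N ^ 2) e} : Set V) := by simp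
  have h2Ne : (N ^ 2) (N e) = 0 := by rw [← hsq (N e)]; exact hNNe
  have h2w : (N ^ 2) ((N ^ 2) e) = 0 := by rw [← hsq ((N ^ 2) e), hNw, map_zero]
  refine ⟨hN3, hN2, ⟨Submodule.span ℝ {e, N e, (N ^ 2) e}, ?_, ?_, ?_⟩, ?_, ?_⟩
  · -- invariance
    intro x hx
    rw [hhx x]
    refine Submodule.add_mem _ hx ?_
    obtain ⟨c, d, hcd⟩ := himN x
    rw [hcd]
    exact Submodule.add_mem _
      (Submodule.smul_mem _ _ (Submodule.subset_span hmem_Ne))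
      (Submodule.smul_mem _ _ (Submodule.subset_span hmem_w))
  · -- dimension three
    have hli : LinearIndependent ℝ ![e, N e, (N ^ 2) e] := by
      rw [Fintype.linearIndependent_iff]
      intro gco hg
      rw [Fin.sum_univ_three] at hg
      simp only [Matrix.cons_val_zero, Matrix.cons_val_one, Matrix.head_cons,
        Matrix.cons_val_two, Matrix.tail_cons] at hg
      have hg2 := congrArg (N ^ 2 : V →ₗ[ℝ] V) hg
      rw [map_add, map_add, map_smul, map_smul, map_smul, map_zero, h2Ne, h2w,
        smul_zero, smul_zero, add_zero, add_zero] at hg2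
      have h0 : gco 0 = 0 := by
        rcases smul_eq_zero.mp hg2 with hc | hc
        · exact hc
        · exact absurd hc he
      rw [h0, zero_smul, zero_add] at hg
      have hg1 := congrArg N hg
      rw [map_add, map_smul, map_smul, map_zero, hsq e, hNw, smul_zero, add_zero] at hg1
      have h1 : gco 1 = 0 := by
        rcases smul_eq_zero.mp hg1 with hc | hc
        · exact hc
        · exact absurd hc he
      rw [h1, zero_smul, zero_add] at hg
      have h2 : gco 2 = 0 := by
        rcases smul_eq_zero.mp hg with hc | hc
        · exact hc
        · exact absurd hc he
      intro i
      fin_cases i <;> assumption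
    have hset : ({e, N e, (N ^ 2) e} : Set V) = Set.range ![e, N e, (N ^ 2) e] := by
      ext z
      simp [Matrix.range_cons, Matrix.range_empty]
      tauto
    rw [hset, finrank_span_eq_card hli, Fintype.card_fin]
  · -- identity on the orthogonal complement
    intro v hv
    have hNv : N v = 0 := by
      apply hnd
      intro y
      rw [hadj v y, ← hNg y]
      obtain ⟨c, d, hcd⟩ := himN (g y)
      rw [hcd, QuadraticMap.polar_add_right, QuadraticMap.polar_smul_right,
        QuadraticMap.polar_smul_right,
        hv (N e) (Submodule.subset_span hmem_Ne),
        hv ((N ^ 2) e) (Submodule.subset_span hmem_w)]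
      simp
    rw [hhx v, hNv, add_zero]
  · -- the range of `N ^ 2` is a line
    have hrange : LinearMap.range (N ^ 2) = Submodule.span ℝ {(N ^ 2) e} := by
      apply le_antisymm
      · rintro z ⟨x, rfl⟩
        obtain ⟨c, hc⟩ := him2 x
        exact Submodule.mem_span_singleton.mpr ⟨c, hc.symm⟩
      · rw [Submodule.span_le, Set.singleton_subset_iff]
        exact ⟨e, rfl⟩
    rw [hrange]
    exact finrank_span_singleton he
  · -- the line is isotropic and fixed
    rintro v ⟨x, rfl⟩
    obtain ⟨c, hc⟩ := him2 x
    constructor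
    · rw [hc, QuadraticMap.map_smul, hqw, smul_zero]
    · rw [hhx ((N ^ 2) x), hN3app x, add_zero]
end

section
/- Let V be a finite-dimensional real vector space with a nondegenerate quadratic form q, and let h be an isometry of (V, q). Write the characteristic polynomial of h as (X − 1)^r · Q(X) with Q(1) ≠ 0. Then V is the direct sum of E₁ := ker((h − id)^r) and E_Q := ker(Q(h)); both subspaces are h-invariant; E₁ and E_Q are q-orthogonal to each other; and the restriction of q to each of E₁ and E_Q is nondegenerate. -/
open Module Polynomial LinearMap

/-!
Cayley–Hamilton and the coprimality of `(X - 1)^r` and `Q` give `V = E₁ ⊕ E_Q`. Since `h`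
preserves `B = polar q`, `B (h x - x) (h y) = -B x (h y - y)`; as `Q(1) ≠ 0`, `h - 1` maps `E_Q`
onto itself, so induction on `k` shows that `ker (h - 1)^k` is `B`-orthogonal to `E_Q`. A vector of
either summand that is orthogonal to its own summand is then orthogonal to all of `V`, hence zero.
-/

theorem Polynomial.isCoprime_X_sub_C_of_eval_ne_zero {K : Type*} [Field K] {a : K} {p : K[X]}
    (hp : p.eval a ≠ 0) : IsCoprime (X - C a) p :=
  (irreducible_X_sub_C a).coprime_iff_not_dvd.mpr fun hdvd => hp (dvd_iff_isRoot.mp hdvd)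

section KerAeval

variable {R M : Type*} [CommRing R] [AddCommGroup M] [Module R M]

theorem Polynomial.aeval_apply_mem_ker_aeval (f : Module.End R M) {p : R[X]} (q : R[X]) {x : M}
    (hx : x ∈ ker (aeval f p)) : aeval f q x ∈ ker (aeval f p) := by
  rw [mem_ker] at hx ⊢
  rw [← Module.End.mul_apply, ← map_mul, mul_comm, map_mul, Module.End.mul_apply, hx, map_zero]

theorem Polynomial.apply_mem_ker_aeval (f : Module.End R M) {p : R[X]} {x : M}
    (hx : x ∈ ker (aeval f p)) : f x ∈ ker (aeval f p) := by
  simpa using aeval_apply_mem_ker_aeval f X hx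

theorem Polynomial.exists_mem_ker_aeval_apply_eq (f : Module.End R M) {p q : R[X]}
    (hpq : IsCoprime p q) {y : M} (hy : y ∈ ker (aeval f q)) :
    ∃ z ∈ ker (aeval f q), aeval f p z = y := by
  obtain ⟨a, b, hab⟩ := hpq
  refine ⟨aeval f a y, aeval_apply_mem_ker_aeval f a hy, ?_⟩
  rw [mem_ker] at hy
  calc aeval f p (aeval f a y) = aeval f (a * p + b * q) y := by
        simp [mul_comm a p, Module.End.mul_apply, hy]
    _ = y := by rw [hab, map_one, Module.End.one_apply]

theorem Polynomial.isCompl_ker_aeval_of_isCoprime (f : Module.End R M) {p q : R[X]}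
    (hpq : IsCoprime p q) (hf : aeval f (p * q) = 0) :
    IsCompl (ker (aeval f p)) (ker (aeval f q)) :=
  ⟨disjoint_ker_aeval_of_isCoprime f hpq, codisjoint_iff.mpr <| by
    rw [sup_ker_aeval_eq_ker_aeval_mul_of_coprime f hpq, hf, ker_zero]⟩

end KerAeval

namespace LinearMap.BilinForm

variable {R M : Type*} [CommRing R] [AddCommGroup M] [Module R M] {B : LinearMap.BilinForm R M}

theorem apply_sub_self_apply {f : Module.End R M} (hB : ∀ x y, B (f x) (f y) = B x y) (x y : M) :
    B (f x - x) (f y) = -B x (f y - y) := by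
  simp [hB]

theorem apply_eq_zero_of_pow_sub_one_apply_eq_zero {f : Module.End R M}
    (hB : ∀ x y, B (f x) (f y) = B x y) {W : Submodule R M} (hfW : ∀ z ∈ W, f z ∈ W)
    (hW : ∀ y ∈ W, ∃ z ∈ W, f z - z = y) (k : ℕ) {x y : M} (hx : ((f - 1) ^ k) x = 0)
    (hy : y ∈ W) : B x y = 0 := by
  induction k generalizing x y with
  | zero => simp_all
  | succ k ih =>
    obtain ⟨z, hz, rfl⟩ := hW y hy
    have hfx : ((f - 1) ^ k) (f x - x) = 0 := by simpa [pow_succ] using hx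
    rw [← neg_eq_zero, ← apply_sub_self_apply hB]
    exact ih hfx (hfW z hz)

theorem eq_zero_of_mem_of_sup_eq_top (hB : SeparatingLeft B) {U W : Submodule R M}
    (hUW : U ⊔ W = ⊤) (hortho : ∀ x ∈ U, ∀ y ∈ W, B x y = 0) {x : M} (hx : x ∈ U)
    (hxU : ∀ y ∈ U, B x y = 0) : x = 0 := by
  refine hB x fun w => ?_
  obtain ⟨u, hu, v, hv, rfl⟩ := Submodule.mem_sup.mp (hUW ▸ Submodule.mem_top : w ∈ U ⊔ W)
  rw [map_add, hxU u hu, hortho x hx v hv, add_zero]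

end LinearMap.BilinForm

theorem LinearMap.BilinForm.apply_eq_zero_of_mem_ker_sub_one_pow_of_mem_ker_aeval
    {K V : Type*} [Field K] [AddCommGroup V] [Module K V] {B : LinearMap.BilinForm K V}
    {f : Module.End K V}
    (hB : ∀ x y, B (f x) (f y) = B x y) {q : K[X]} (hq : q.eval 1 ≠ 0) (k : ℕ) {x y : V}
    (hx : x ∈ ker ((f - 1) ^ k)) (hy : y ∈ ker (aeval f q)) : B x y = 0 :=
  apply_eq_zero_of_pow_sub_one_apply_eq_zero hB (fun _ => apply_mem_ker_aeval f)
    (fun _ hy => by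
      simpa using exists_mem_ker_aeval_apply_eq f (isCoprime_X_sub_C_of_eval_ne_zero hq) hy)
    k hx hy

theorem isometry_charpoly_orthogonal_decomposition_general
    {V : Type*} [AddCommGroup V] [Module ℝ V] [FiniteDimensional ℝ V]
    (q : QuadraticForm ℝ V)
    (hqnd : ∀ v : V, (∀ w : V, QuadraticMap.polar q v w = 0) → v = 0)
    (h : V →ₗ[ℝ] V)
    (hiso : ∀ v, q (h v) = q v)
    (r : ℕ) (Q : Polynomial ℝ)
    (hchar : LinearMap.charpoly h = (X - 1) ^ r * Q)
    (hQ1 : Q.eval 1 ≠ 0) :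
    IsCompl (LinearMap.ker ((h - 1) ^ r)) (LinearMap.ker (Polynomial.aeval h Q)) ∧
    (∀ x ∈ LinearMap.ker ((h - 1) ^ r), h x ∈ LinearMap.ker ((h - 1) ^ r)) ∧
    (∀ x ∈ LinearMap.ker (Polynomial.aeval h Q),
        h x ∈ LinearMap.ker (Polynomial.aeval h Q)) ∧
    (∀ x ∈ LinearMap.ker ((h - 1) ^ r), ∀ y ∈ LinearMap.ker (Polynomial.aeval h Q),
        QuadraticMap.polar q x y = 0) ∧
    (∀ x ∈ LinearMap.ker ((h - 1) ^ r),
        (∀ y ∈ LinearMap.ker ((h - 1) ^ r), QuadraticMap.polar q x y = 0) → x = 0) ∧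
    (∀ x ∈ LinearMap.ker (Polynomial.aeval h Q),
        (∀ y ∈ LinearMap.ker (Polynomial.aeval h Q), QuadraticMap.polar q x y = 0) → x = 0) := by
  have hpow : (h - 1) ^ r = aeval h ((X - 1 : ℝ[X]) ^ r) := by simp
  have hcop : IsCoprime ((X - 1 : ℝ[X]) ^ r) Q := by
    simpa using (isCoprime_X_sub_C_of_eval_ne_zero hQ1).pow_left (m := r)
  have hcompl : IsCompl (ker ((h - 1) ^ r)) (ker (aeval h Q)) := by
    rw [hpow]
    exact isCompl_ker_aeval_of_isCoprime h hcop (by rw [← hchar, aeval_self_charpoly])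
  let B := QuadraticMap.polarBilin q
  have hB : ∀ x y, B (h x) (h y) = B x y := by
    simp only [B, QuadraticMap.polarBilin_apply_apply, QuadraticMap.polar, ← map_add, hiso,
      implies_true]
  have hortho : ∀ x ∈ ker ((h - 1) ^ r), ∀ y ∈ ker (aeval h Q), B x y = 0 :=
    fun _ hx _ hy => BilinForm.apply_eq_zero_of_mem_ker_sub_one_pow_of_mem_ker_aeval hB hQ1 r hx hy
  have hortho' : ∀ x ∈ ker (aeval h Q), ∀ y ∈ ker ((h - 1) ^ r), B x y = 0 :=
    fun x hx y hy => (QuadraticMap.polar_comm q x y).trans (hortho y hy x hx)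
  refine ⟨hcompl, fun _ hx => ?_, fun _ hx => ?_, hortho,
    fun _ => BilinForm.eq_zero_of_mem_of_sup_eq_top (B := B) hqnd hcompl.sup_eq_top hortho,
    fun _ => BilinForm.eq_zero_of_mem_of_sup_eq_top (B := B) hqnd hcompl.symm.sup_eq_top hortho'⟩
  · rw [hpow] at hx ⊢
    exact apply_mem_ker_aeval h hx
  · exact apply_mem_ker_aeval h hx

/-- Let `V` be a finite-dimensional real vector space with a nondegenerate
quadratic form `q`, and `h` an isometry of `(V, q)` with characteristic polynomial
`(X - 1)^r * Q`, where `Q(1) ≠ 0`.  Then `V = E₁ ⊕ E_Q` with `E₁ = ker (h - id)^r` and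
`E_Q = ker Q(h)`; both subspaces are `h`-invariant, they are `q`-orthogonal to each other,
and the restriction of `q` to each of them is nondegenerate. -/
theorem isometry_charpoly_orthogonal_decomposition
    {V : Type*} [AddCommGroup V] [Module ℝ V] [FiniteDimensional ℝ V]
    (q : QuadraticForm ℝ V)
    (hqnd : ∀ v : V, (∀ w : V, QuadraticMap.polar q v w = 0) → v = 0)
    (h : V →ₗ[ℝ] V) (hbij : Function.Bijective h)
    (hiso : ∀ v, q (h v) = q v)
    (r : ℕ) (Q : Polynomial ℝ)
    (hchar : LinearMap.charpoly h = (X - 1) ^ r * Q)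
    (hQ1 : Q.eval 1 ≠ 0) :
    IsCompl (LinearMap.ker ((h - 1) ^ r)) (LinearMap.ker (Polynomial.aeval h Q)) ∧
    (∀ x ∈ LinearMap.ker ((h - 1) ^ r), h x ∈ LinearMap.ker ((h - 1) ^ r)) ∧
    (∀ x ∈ LinearMap.ker (Polynomial.aeval h Q),
        h x ∈ LinearMap.ker (Polynomial.aeval h Q)) ∧
    (∀ x ∈ LinearMap.ker ((h - 1) ^ r), ∀ y ∈ LinearMap.ker (Polynomial.aeval h Q),
        QuadraticMap.polar q x y = 0) ∧
    (∀ x ∈ LinearMap.ker ((h - 1) ^ r),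
        (∀ y ∈ LinearMap.ker ((h - 1) ^ r), QuadraticMap.polar q x y = 0) → x = 0) ∧
    (∀ x ∈ LinearMap.ker (Polynomial.aeval h Q),
        (∀ y ∈ LinearMap.ker (Polynomial.aeval h Q), QuadraticMap.polar q x y = 0) → x = 0) :=
  isometry_charpoly_orthogonal_decomposition_general q hqnd h hiso r Q hchar hQ1
end

section
/- Let V be a finite-dimensional real vector space with a nondegenerate quadratic form q of signature (1, m), let h be a parabolic isometry of (V, q), and let W ⊆ V be an h-invariant linear subspace such that the restriction of q to W is nondegenerate and indefinite (q takes both positive and negative values on W). Then the restriction of h to W is a parabolic isometry of (W, q|_W). -/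
open Module TensorProduct QuadraticMap

/-!
Let `W'` be the `q`-orthogonal complement of `W`, so that `V = W ⊕ W'` with both summands
`h`-invariant. Since `W` contains a timelike vector and `q` has only one positive direction, `q`
is negative semidefinite on `W'`, and nondegeneracy of `q` makes it negative definite there. An
isometry of an anisotropic form is semisimple (orthogonal complements of invariant subspaces are
invariant complements), so `h|W'` becomes diagonalizable over `ℂ`. Were `h|W` diagonalizable
over `ℂ` too, so would be `h`, which is not the case for a parabolic isometry.
-/

namespace Module.End

section Intertwining

variable {R M N : Type*} [CommRing R] [AddCommGroup M] [Module R M] [AddCommGroup N] [Module R N]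
  {f : End R M} {g : End R N} {ι : N →ₗ[R] M}

lemma map_eigenspace_le_of_comp_eq (hι : f ∘ₗ ι = ι ∘ₗ g) (μ : R) :
    (g.eigenspace μ).map ι ≤ f.eigenspace μ := by
  rintro _ ⟨x, hx, rfl⟩
  rw [SetLike.mem_coe, mem_eigenspace_iff] at hx
  rw [mem_eigenspace_iff, ← LinearMap.comp_apply, hι, LinearMap.comp_apply, hx, map_smul]

lemma HasEigenvalue.of_comp_eq (hι : f ∘ₗ ι = ι ∘ₗ g) (hinj : Function.Injective ι)
    {μ : R} (hμ : g.HasEigenvalue μ) : f.HasEigenvalue μ := by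
  rw [hasEigenvalue_iff, ← bot_lt_iff_ne_bot] at hμ ⊢
  calc ⊥ < (g.eigenspace μ).map ι := by
        rwa [← Submodule.map_bot ι, Submodule.map_lt_map_iff_of_injective hinj]
    _ ≤ f.eigenspace μ := map_eigenspace_le_of_comp_eq hι μ

end Intertwining

section BaseChange

variable {R A M : Type*} [CommRing R] [CommRing A] [Algebra R A] [AddCommGroup M] [Module R M]
  {f : End R M} {p q : Submodule R M}

lemma baseChange_comp_baseChange_subtype (hp : ∀ x ∈ p, f x ∈ p) :
    f.baseChange A ∘ₗ p.subtype.baseChange A =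
      p.subtype.baseChange A ∘ₗ (f.restrict hp).baseChange A := by
  rw [← LinearMap.baseChange_comp, ← LinearMap.baseChange_comp]
  rfl

lemma HasEigenvalue.of_baseChange_restrict [Module.Flat R A] (hp : ∀ x ∈ p, f x ∈ p) {μ : A}
    (hμ : HasEigenvalue ((f.restrict hp).baseChange A) μ) :
    HasEigenvalue (f.baseChange A) μ :=
  hμ.of_comp_eq (baseChange_comp_baseChange_subtype hp)
    (Module.Flat.lTensor_preserves_injective_linearMap _ p.injective_subtype)

lemma iSup_eigenspace_baseChange_eq_top_of_sup_eq_top (hp : ∀ x ∈ p, f x ∈ p)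
    (hq : ∀ x ∈ q, f x ∈ q) (hpq : p ⊔ q = ⊤)
    (hfp : ⨆ μ : A, eigenspace ((f.restrict hp).baseChange A) μ = ⊤)
    (hfq : ⨆ μ : A, eigenspace ((f.restrict hq).baseChange A) μ = ⊤) :
    ⨆ μ : A, eigenspace (f.baseChange A) μ = ⊤ := by
  set S := ⨆ μ : A, eigenspace (f.baseChange A) μ
  have range_le {r : Submodule R M} (hr : ∀ x ∈ r, f x ∈ r)
      (hfr : ⨆ μ : A, eigenspace ((f.restrict hr).baseChange A) μ = ⊤) :
      LinearMap.range (r.subtype.baseChange A) ≤ S := by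
    rw [LinearMap.range_eq_map, ← hfr, Submodule.map_iSup]
    exact iSup_mono (map_eigenspace_le_of_comp_eq (baseChange_comp_baseChange_subtype hr))
  refine Submodule.eq_top_iff'.mpr fun z ↦ ?_
  induction z using TensorProduct.induction_on with
  | zero => exact S.zero_mem
  | tmul c v =>
    obtain ⟨x, hx, y, hy, rfl⟩ :=
      Submodule.mem_sup.mp (hpq ▸ Submodule.mem_top : v ∈ p ⊔ q)
    rw [tmul_add]
    exact S.add_mem (range_le hp hfp ⟨c ⊗ₜ ⟨x, hx⟩, rfl⟩)
      (range_le hq hfq ⟨c ⊗ₜ ⟨y, hy⟩, rfl⟩)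
  | add z₁ z₂ h₁ h₂ => exact S.add_mem h₁ h₂

end BaseChange

lemma IsSemisimple.iSup_eigenspace_baseChange_eq_top {K L M : Type*} [Field K] [PerfectField K]
    [Field L] [IsAlgClosed L] [Algebra K L] [AddCommGroup M] [Module K M] [FiniteDimensional K M]
    {f : End K M} (hf : f.IsSemisimple) :
    ⨆ μ : L, eigenspace (f.baseChange L) μ = ⊤ := by
  refine IsSemisimple.iSup_eigenspace_eq_top <|
    isSemisimple_of_squarefree_aeval_eq_zero (p := (minpoly K f).map (algebraMap K L)) ?_ ?_
  · exact (PerfectField.separable_iff_squarefree.mpr hf.minpoly_squarefree).map.squarefree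
  · rw [Polynomial.aeval_map_algebraMap, show f.baseChange L = baseChangeHom K L M f from rfl,
      Polynomial.aeval_algHom_apply, minpoly.aeval, map_zero]

end Module.End

section FiniteDimensional

variable {K M : Type*} [Field K] [AddCommGroup M] [Module K M] [FiniteDimensional K M]

lemma LinearMap.bijective_restrict_of_injective {f : End K M} (hf : Function.Injective f)
    {p : Submodule K M} (hp : ∀ x ∈ p, f x ∈ p) : Function.Bijective (f.restrict hp) := by
  have hinj : Function.Injective (f.restrict hp) :=
    (LinearMap.injective_restrict_iff hp).mpr (by simp [LinearMap.ker_eq_bot.mpr hf])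
  exact ⟨hinj, LinearMap.injective_iff_surjective.mp hinj⟩

lemma LinearMap.BilinForm.orthogonal_invariant {B : LinearMap.BilinForm K M} {f : End K M}
    (hB : ∀ x y, B (f x) (f y) = B x y) (hf : Function.Injective f) {p : Submodule K M}
    (hp : ∀ x ∈ p, f x ∈ p) : ∀ x ∈ B.orthogonal p, f x ∈ B.orthogonal p := by
  intro x hx y hy
  obtain ⟨⟨z, hz⟩, hzy⟩ := (bijective_restrict_of_injective hf hp).2 ⟨y, hy⟩
  obtain rfl : f z = y := congrArg Subtype.val hzy
  exact (hB z x).trans (hx z hz)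

end FiniteDimensional

namespace QuadraticMap

section Field

variable {K M : Type*} [Field K] [AddCommGroup M] [Module K M] {Q : QuadraticForm K M}

lemma isRefl_polarBilin (Q : QuadraticForm K M) : (polarBilin Q).IsRefl :=
  fun x y h ↦ by rwa [polarBilin_apply_apply, polar_comm]

lemma polar_map_of_forall_map_eq {f : End K M} (hf : ∀ x, Q (f x) = Q x) (x y : M) :
    polar Q (f x) (f y) = polar Q x y := by
  simp only [polar, ← map_add, hf]

lemma map_smul_add_smul_of_polar_eq_zero {x y : M} (h : polar Q x y = 0) (a c : K) :
    Q (a • x + c • y) = a ^ 2 * Q x + c ^ 2 * Q y := by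
  have hxy : IsOrtho Q (a • x) (c • y) := isOrtho_polarBilin.mp (by simp [h])
  rw [hxy, QuadraticMap.map_smul, QuadraticMap.map_smul, smul_eq_mul, smul_eq_mul, pow_two,
    pow_two]

lemma separatingLeft_polarBilin_of_basis [NeZero (2 : K)] {ι : Type*} (b : Basis ι K M)
    (horth : ∀ i j, i ≠ j → polar Q (b i) (b j) = 0) (hb : ∀ i, Q (b i) ≠ 0) :
    (polarBilin Q).SeparatingLeft :=
  LinearMap.IsOrthoᵢ.separatingLeft_of_not_isOrtho_basis_self b horth fun i ↦ by
    simp [polar_self, hb i, two_ne_zero]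

lemma Anisotropic.isSemisimple_of_forall_map_eq [FiniteDimensional K M] [NeZero (2 : K)]
    (hQ : Q.Anisotropic) {f : End K M} (hf : ∀ x, Q (f x) = Q x) : f.IsSemisimple := by
  have hinj : Function.Injective f := by
    rw [← LinearMap.ker_eq_bot, LinearMap.ker_eq_bot']
    exact fun x hx ↦ hQ x (by rw [← hf, hx, map_zero])
  refine Module.End.isSemisimple_iff.mpr fun p hp ↦
    ⟨LinearMap.BilinForm.orthogonal (polarBilin Q) p, LinearMap.BilinForm.orthogonal_invariant
      (polar_map_of_forall_map_eq hf) hinj hp, ?_⟩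
  refine LinearMap.BilinForm.isCompl_orthogonal_of_restrict_nondegenerate (isRefl_polarBilin Q) ?_
  refine LinearMap.BilinForm.Nondegenerate.ofSeparatingLeft fun x hx ↦ Subtype.ext (hQ x ?_)
  have h2 : (2 : K) * Q x = 0 := by simpa [polar_self] using hx x
  exact (mul_eq_zero.mp h2).resolve_left two_ne_zero

end Field

section OrderedField

variable {R M : Type*} [Field R] [LinearOrder R] [AddCommGroup M] [Module R M]
  {Q : QuadraticForm R M}

lemma finrank_add_finrank_le_of_pos_of_nonpos [FiniteDimensional R M] {P N : Submodule R M}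
    (hP : ∀ v ∈ P, v ≠ 0 → 0 < Q v) (hN : ∀ v ∈ N, Q v ≤ 0) :
    finrank R P + finrank R N ≤ finrank R M := by
  have hPN : P ⊓ N = ⊥ := by
    refine (Submodule.eq_bot_iff _).mpr fun v ⟨hvP, hvN⟩ ↦ ?_
    by_contra hv
    exact (hN v hvN).not_gt (hP v hvP hv)
  rw [← Submodule.finrank_sup_add_finrank_inf_eq, hPN, finrank_bot, add_zero]
  exact Submodule.finrank_le _

lemma polar_eq_zero_of_nonpos_of_eq_zero [IsStrictOrderedRing R] {N : Submodule R M}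
    (hN : ∀ v ∈ N, Q v ≤ 0) {x y : M} (hx : x ∈ N) (hx0 : Q x = 0) (hy : y ∈ N) :
    polar Q x y = 0 := by
  set p := polar Q x y
  set c := Q y
  have key (t : R) : t * p + t ^ 2 * c ≤ 0 := by
    have hxy := hN _ (N.add_mem hx (N.smul_mem t hy))
    have : polar Q x (t • y) = Q (x + t • y) - Q x - Q (t • y) := rfl
    rw [polar_smul_right, QuadraticMap.map_smul, smul_eq_mul, smul_eq_mul, hx0] at this
    nlinarith
  have h1c : 1 - c ≠ 0 := by linarith [hN y hy]
  have hsq : (p / (1 - c)) ^ 2 = 0 := by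
    refine le_antisymm ?_ (sq_nonneg _)
    calc (p / (1 - c)) ^ 2 = p / (1 - c) * p + (p / (1 - c)) ^ 2 * c := by field_simp; ring
      _ ≤ 0 := key _
  simpa [h1c] using hsq

end OrderedField

end QuadraticMap

section Signature

variable {V : Type*} [AddCommGroup V] [Module ℝ V] {m : ℕ} {q : QuadraticForm ℝ V}
  {b : Basis (Fin (m + 1)) ℝ V} (horth : ∀ i j, i ≠ j → polar q (b i) (b j) = 0)
  (hneg : ∀ i : Fin (m + 1), i ≠ 0 → q (b i) < 0)

include horth hneg

lemma nonpos_of_basis_repr_zero {v : V} (hv : b.repr v 0 = 0) : q v ≤ 0 := by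
  have hb : (associated (R := ℝ) q).IsOrthoᵢ b :=
    LinearMap.isOrthoᵢ_def.mpr fun i j hij ↦ by
      rw [associated_apply]
      exact mul_eq_zero_of_right _ (horth i j hij)
  have := congrArg (· (b.repr v)) (basisRepr_eq_of_iIsOrtho q b hb)
  simp only [basisRepr_apply, b.sum_repr, weightedSumSquares_apply] at this
  rw [this]
  refine Finset.sum_nonpos fun i _ ↦ ?_
  rcases eq_or_ne i 0 with rfl | hi
  · simp [hv]
  · exact smul_nonpos_of_nonpos_of_nonneg (hneg i hi).le (mul_self_nonneg _)

lemma nonpos_of_polar_eq_zero_of_pos [FiniteDimensional ℝ V] {x w : V} (hxw : polar q x w = 0)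
    (hw : 0 < q w) : q x ≤ 0 := by
  by_contra! hx
  have hpos (a c : ℝ) (hac : ¬(a = 0 ∧ c = 0)) : 0 < q (a • x + c • w) := by
    rw [map_smul_add_smul_of_polar_eq_zero hxw]
    rcases not_and_or.mp hac with ha | hc
    · have : 0 < a ^ 2 := by positivity
      nlinarith [sq_nonneg c]
    · have : 0 < c ^ 2 := by positivity
      nlinarith [sq_nonneg a]
  have hli : LinearIndependent ℝ ![x, w] := by
    refine LinearIndependent.pair_iff.mpr fun a c hac ↦ ?_
    by_contra h
    exact (hpos a c h).ne' (by rw [hac, map_zero])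
  have hP : ∀ v ∈ Submodule.span ℝ (Set.range ![x, w]), v ≠ 0 → 0 < q v := by
    intro v hv hv0
    obtain ⟨c, rfl⟩ := (Submodule.mem_span_range_iff_exists_fun ℝ).mp hv
    simp only [Fin.sum_univ_two, Matrix.cons_val_zero, Matrix.cons_val_one] at hv0 ⊢
    refine hpos _ _ fun h ↦ hv0 ?_
    simp [h.1, h.2]
  have hdim := finrank_add_finrank_le_of_pos_of_nonpos hP
    (N := LinearMap.ker (b.coord 0)) fun v hv ↦ nonpos_of_basis_repr_zero horth hneg hv
  have hker := (b.coord 0).finrank_range_add_finrank_ker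
  have hrange := Submodule.finrank_le (LinearMap.range (b.coord 0))
  rw [finrank_span_eq_card hli, finrank_eq_card_basis b] at hdim
  rw [finrank_eq_card_basis b] at hker
  simp only [Fintype.card_fin, finrank_self] at hdim hker hrange
  omega

lemma anisotropic_comp_subtype_orthogonal [FiniteDimensional ℝ V] (hpos : 0 < q (b 0))
    {W : Submodule ℝ V} (hW : W ⊔ LinearMap.BilinForm.orthogonal (polarBilin q) W = ⊤)
    (hWpos : ∃ w ∈ W, 0 < q w) :
    (q.comp (LinearMap.BilinForm.orthogonal (polarBilin q) W).subtype).Anisotropic := by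
  set W' := LinearMap.BilinForm.orthogonal (polarBilin q) W
  obtain ⟨w, hw, hqw⟩ := hWpos
  have hperp {x : V} (hx : x ∈ W') {y : V} (hy : y ∈ W) : polar q x y = 0 := by
    rw [polar_comm]
    exact hx y hy
  have hnonpos : ∀ x ∈ W', q x ≤ 0 :=
    fun x hx ↦ nonpos_of_polar_eq_zero_of_pos horth hneg (hperp hx hw) hqw
  have hsep := separatingLeft_polarBilin_of_basis b horth fun i ↦ by
    rcases eq_or_ne i 0 with rfl | hi
    exacts [hpos.ne', (hneg i hi).ne]
  rintro ⟨x, hx⟩ hx0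
  replace hx0 : q x = 0 := hx0
  refine Subtype.ext (hsep x fun v ↦ ?_)
  obtain ⟨y, hy, y', hy', rfl⟩ :=
    Submodule.mem_sup.mp (hW ▸ Submodule.mem_top : v ∈ W ⊔ W')
  rw [map_add, polarBilin_apply_apply, polarBilin_apply_apply, hperp hx hy,
    polar_eq_zero_of_nonpos_of_eq_zero hnonpos hx hx0 hy', add_zero]

end Signature

theorem parabolic_restricts_to_parabolic_general
    {V : Type*} [AddCommGroup V] [Module ℝ V] [FiniteDimensional ℝ V]
    (m : ℕ) (q : QuadraticForm ℝ V)
    (b : Basis (Fin (m + 1)) ℝ V)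
    (horth : ∀ i j, i ≠ j → QuadraticMap.polar q (b i) (b j) = 0)
    (hpos : 0 < q (b 0))
    (hneg : ∀ i : Fin (m + 1), i ≠ 0 → q (b i) < 0)
    (h : V →ₗ[ℝ] V) (hbij : Function.Bijective h)
    (hiso : ∀ v, q (h v) = q v)
    (heig : ∀ μ : ℂ, Module.End.HasEigenvalue (LinearMap.baseChange ℂ h) μ → ‖μ‖ = 1)
    (hnodiag : ¬ (⨆ μ : ℂ, Module.End.eigenspace (LinearMap.baseChange ℂ h) μ) = ⊤)
    (W : Submodule ℝ V) (hW : ∀ x ∈ W, h x ∈ W)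
    (hWnd : ∀ x ∈ W, (∀ y ∈ W, QuadraticMap.polar q x y = 0) → x = 0)
    (hWpos : ∃ x ∈ W, 0 < q x) :
    Function.Bijective (h.restrict hW) ∧
    (∀ w : W, q ((h.restrict hW w : W) : V) = q (w : V)) ∧
    (∀ μ : ℂ, Module.End.HasEigenvalue (LinearMap.baseChange ℂ (h.restrict hW)) μ →
        ‖μ‖ = 1) ∧
    ¬ (⨆ μ : ℂ, Module.End.eigenspace (LinearMap.baseChange ℂ (h.restrict hW)) μ) = ⊤ := by
  refine ⟨LinearMap.bijective_restrict_of_injective hbij.1 hW, fun w ↦ hiso w,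
    fun μ hμ ↦ heig μ (hμ.of_baseChange_restrict hW), fun hdiagW ↦ hnodiag ?_⟩
  set W' := LinearMap.BilinForm.orthogonal (polarBilin q) W
  have hcompl : IsCompl W W' :=
    LinearMap.BilinForm.isCompl_orthogonal_of_restrict_nondegenerate (isRefl_polarBilin q) <|
      .ofSeparatingLeft fun x hx ↦ Subtype.ext (hWnd x x.2 fun y hy ↦ hx ⟨y, hy⟩)
  have hW' : ∀ x ∈ W', h x ∈ W' :=
    LinearMap.BilinForm.orthogonal_invariant (polar_map_of_forall_map_eq hiso) hbij.1 hW
  have hss : Module.End.IsSemisimple (h.restrict hW') :=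
    (anisotropic_comp_subtype_orthogonal horth hneg hpos hcompl.sup_eq_top hWpos)
      |>.isSemisimple_of_forall_map_eq (f := h.restrict hW') fun x ↦ hiso x
  exact Module.End.iSup_eigenspace_baseChange_eq_top_of_sup_eq_top hW hW' hcompl.sup_eq_top
    hdiagW hss.iSup_eigenspace_baseChange_eq_top

/-- Let `h` be a parabolic isometry of `(V, q)`, where `q` is a
nondegenerate quadratic form of signature `(1, m)`, and let `W` be an `h`-invariant
subspace on which `q` restricts to a nondegenerate indefinite form.  Then the restriction
of `h` to `W` is a parabolic isometry of `(W, q|_W)`: it is bijective, preserves `q|_W`,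
all eigenvalues of its complexification have modulus `1`, and its complexification is
not diagonalizable. -/
theorem parabolic_restricts_to_parabolic
    {V : Type*} [AddCommGroup V] [Module ℝ V] [FiniteDimensional ℝ V]
    (m : ℕ) (q : QuadraticForm ℝ V)
    (b : Basis (Fin (m + 1)) ℝ V)
    (horth : ∀ i j, i ≠ j → QuadraticMap.polar q (b i) (b j) = 0)
    (hpos : 0 < q (b 0))
    (hneg : ∀ i : Fin (m + 1), i ≠ 0 → q (b i) < 0)
    (h : V →ₗ[ℝ] V) (hbij : Function.Bijective h)
    (hiso : ∀ v, q (h v) = q v)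
    (heig : ∀ μ : ℂ, Module.End.HasEigenvalue (LinearMap.baseChange ℂ h) μ → ‖μ‖ = 1)
    (hnodiag : ¬ (⨆ μ : ℂ, Module.End.eigenspace (LinearMap.baseChange ℂ h) μ) = ⊤)
    (W : Submodule ℝ V) (hW : ∀ x ∈ W, h x ∈ W)
    (hWnd : ∀ x ∈ W, (∀ y ∈ W, QuadraticMap.polar q x y = 0) → x = 0)
    (hWpos : ∃ x ∈ W, 0 < q x) (hWneg : ∃ y ∈ W, q y < 0) :
    Function.Bijective (h.restrict hW) ∧
    (∀ w : W, q ((h.restrict hW w : W) : V) = q (w : V)) ∧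
    (∀ μ : ℂ, Module.End.HasEigenvalue (LinearMap.baseChange ℂ (h.restrict hW)) μ →
        ‖μ‖ = 1) ∧
    ¬ (⨆ μ : ℂ, Module.End.eigenspace (LinearMap.baseChange ℂ (h.restrict hW)) μ) = ⊤ :=
  parabolic_restricts_to_parabolic_general m q b horth hpos hneg h hbij hiso heig hnodiag W hW hWnd
    hWpos
end

section
/- For every m ≥ 1, the set of points x of the torus (ℝ/ℤ)^m such that the cyclic subgroup {n • x : n ∈ ℤ} is dense in (ℝ/ℤ)^m is itself a dense subset of (ℝ/ℤ)^m. -/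
/-!
The topological generators of a second countable Baire group form the intersection, over a
countable basis of nonempty open sets `U`, of the open sets `⋃ n, (n • ·)⁻¹' U`, so it suffices
that each of these is dense. On the torus, every point is `n • y` for some `y` of norm at most
`1 / (2n)`; hence, given `v` and `u ∈ U`, the point `v + y` with `n • y = u - n • v` lies
arbitrarily close to `v` for large `n` and satisfies `n • (v + y) = u`.
-/

open Set

namespace AddCircle

variable {p : ℝ}

theorem exists_nsmul_eq_norm_le (z : AddCircle p) {n : ℕ} (hn : n ≠ 0) :
    ∃ y : AddCircle p, n • y = z ∧ ‖y‖ ≤ ‖z‖ / n := by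
  obtain ⟨x, rfl⟩ := QuotientAddGroup.mk_surjective z
  -- `s` is the lift of `x` of least absolute value.
  set s := x - round (p⁻¹ * x) * p
  have hs : (s : AddCircle p) = x := by
    rw [coe_sub, sub_eq_self, coe_eq_zero_iff]
    exact ⟨round (p⁻¹ * x), zsmul_eq_mul _ _⟩
  refine ⟨(s / n : ℝ), ?_, ?_⟩
  · rw [← coe_nsmul, nsmul_eq_mul, mul_div_cancel₀ _ (Nat.cast_ne_zero.2 hn), hs]
  · calc ‖((s / n : ℝ) : AddCircle p)‖ ≤ ‖s / n‖ := QuotientAddGroup.norm_mk_le_norm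
      _ = ‖((x : ℝ) : AddCircle p)‖ / n := by
        rw [norm_div, Real.norm_natCast, Real.norm_eq_abs, ← norm_eq]

theorem exists_nsmul_eq_norm_le_half_period {ι : Type*} [Fintype ι] (hp : p ≠ 0)
    (z : ι → AddCircle p) {n : ℕ} (hn : n ≠ 0) :
    ∃ y : ι → AddCircle p, n • y = z ∧ ‖y‖ ≤ |p| / (2 * n) := by
  choose y hyz hy using fun i => (z i).exists_nsmul_eq_norm_le hn
  refine ⟨y, funext hyz, pi_norm_le_iff_of_nonneg (by positivity) |>.2 fun i => ?_⟩
  calc ‖y i‖ ≤ ‖z i‖ / n := hy i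
    _ ≤ |p| / 2 / n := by gcongr; exact norm_le_half_period p hp
    _ = |p| / (2 * n) := div_div _ _ _

end AddCircle

theorem dense_iUnion_preimage_zsmul_torus {ι : Type*} [Fintype ι] {p : ℝ} (hp : p ≠ 0)
    {U : Set (ι → AddCircle p)} (hU : U.Nonempty) :
    Dense (⋃ n : ℤ, (n • ·) ⁻¹' U) := by
  rw [Metric.dense_iff]
  intro v ε hε
  obtain ⟨u, hu⟩ := hU
  obtain ⟨n, hn⟩ := exists_nat_gt (|p| / (2 * ε))
  have hn_pos : (0 : ℝ) < n := (div_pos (abs_pos.2 hp) (mul_pos two_pos hε)).trans hn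
  obtain ⟨y, hy, hyε⟩ :=
    AddCircle.exists_nsmul_eq_norm_le_half_period hp (u - n • v) (Nat.cast_pos.1 hn_pos).ne'
  refine ⟨v + y, ?_, mem_iUnion.2 ⟨n, ?_⟩⟩
  · rw [Metric.mem_ball, dist_eq_norm, add_sub_cancel_left]
    refine hyε.trans_lt ?_
    rw [div_lt_iff₀ (by positivity)]
    rw [div_lt_iff₀ (mul_pos two_pos hε)] at hn
    linarith
  · simp only [mem_preimage, natCast_zsmul, smul_add, hy, add_sub_cancel, hu]

theorem dense_setOf_dense_zmultiples {G : Type*} [AddGroup G] [TopologicalSpace G]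
    [IsTopologicalAddGroup G] [SecondCountableTopology G] [BaireSpace G]
    (h : ∀ U : Set G, IsOpen U → U.Nonempty → Dense (⋃ n : ℤ, (n • ·) ⁻¹' U)) :
    Dense {x : G | Dense (AddSubgroup.zmultiples x : Set G)} := by
  obtain ⟨B, hBc, hB0, hB⟩ := TopologicalSpace.exists_countable_basis G
  have hBdense : Dense (⋂ U ∈ B, ⋃ n : ℤ, (n • ·) ⁻¹' U : Set G) :=
    dense_biInter_of_isOpen
      (fun U hU => isOpen_iUnion fun n => (hB.isOpen hU).preimage (continuous_zsmul n)) hBc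
      (fun U hU => h U (hB.isOpen hU) (nonempty_iff_ne_empty.2 (ne_of_mem_of_not_mem hU hB0)))
  refine hBdense.mono fun x hx => hB.dense_iff.2 fun U hU _ => ?_
  obtain ⟨n, hn⟩ := mem_iUnion.1 (mem_iInter₂.1 hx U hU)
  exact ⟨n • x, hn, AddSubgroup.zsmul_mem_zmultiples x n⟩

theorem dense_generators_of_torus_general (m : ℕ) :
    Dense {x : Fin m → AddCircle (1 : ℝ) |
      Dense ((AddSubgroup.zmultiples x : AddSubgroup (Fin m → AddCircle (1 : ℝ))) :
        Set (Fin m → AddCircle (1 : ℝ)))} :=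
  dense_setOf_dense_zmultiples fun _ _ hU => dense_iUnion_preimage_zsmul_torus one_ne_zero hU

/-- For `m ≥ 1`, the set of points of the torus `(ℝ/ℤ)^m` generating a
dense cyclic subgroup is dense in the torus. -/
theorem dense_generators_of_torus (m : ℕ) (hm : 1 ≤ m) :
    Dense {x : Fin m → AddCircle (1 : ℝ) |
      Dense ((AddSubgroup.zmultiples x : AddSubgroup (Fin m → AddCircle (1 : ℝ))) :
        Set (Fin m → AddCircle (1 : ℝ)))} :=
  dense_generators_of_torus_general m
end

section
/- Let W be a finite-dimensional real normed vector space, let C ⊆ W be a closed convex cone that is salient (C ∩ (−C) = {0}) and has nonempty interior, let T : W → W be a linear map with T(C) ⊆ C, and let u be a point in the interior of C. Then there is a constant A ≥ 1 such that A⁻¹ · ‖Tⁿ(u)‖ ≤ ‖Tⁿ‖ ≤ A · ‖Tⁿ(u)‖ for all n ≥ 0, where ‖Tⁿ‖ denotes the operator norm of the n-th iterate of T. -/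
/-!
Since `C` is closed and salient, compactness of the unit sphere in `W × W` gives `c > 0` with
`c‖y‖ ≤ ‖y + z‖` for all `y, z ∈ C`. If the ball of radius `ε` about `u` lies in `C`, then for
`‖x‖ = 1` both `Tⁿ(u + εx)` and `Tⁿ(u - εx)` lie in `C` and add up to `2Tⁿu`, so
`‖Tⁿ(u + εx)‖ ≤ (2/c)‖Tⁿu‖` and hence `‖Tⁿ‖ ≤ (2/c + 1)/ε · ‖Tⁿu‖`. The other inequality is
`‖Tⁿu‖ ≤ ‖Tⁿ‖‖u‖`.
-/

open Metric Set

theorem exists_pos_mul_norm_le_of_isClosed_of_smul_mem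
    {E : Type*} [NormedAddCommGroup E] [NormedSpace ℝ E] [FiniteDimensional ℝ E]
    {K : Set E} (hK : IsClosed K) (hsmul : ∀ c : ℝ, 0 ≤ c → ∀ x ∈ K, c • x ∈ K)
    {f : E → ℝ} (hf : Continuous f) (hhom : ∀ c : ℝ, 0 ≤ c → ∀ x, f (c • x) = c * f x)
    (hpos : ∀ x ∈ K, x ≠ 0 → 0 < f x) :
    ∃ m > 0, ∀ x ∈ K, m * ‖x‖ ≤ f x := by
  obtain ⟨m, hm, hmin⟩ := ((isCompact_sphere (0 : E) 1).inter_left hK).exists_forall_le'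
    hf.continuousOn (a := 0) fun x hx => hpos x hx.1 (ne_zero_of_mem_unit_sphere ⟨x, hx.2⟩)
  refine ⟨m, hm, fun x hx => ?_⟩
  rcases eq_or_ne x 0 with rfl | hx0
  · have hf0 : f 0 = 0 := by simpa using hhom 0 le_rfl 0
    simp [hf0]
  have hnorm : 0 < ‖x‖ := norm_pos_iff.mpr hx0
  have hunit : ‖x‖⁻¹ • x ∈ K ∩ sphere 0 1 :=
    ⟨hsmul _ (inv_nonneg.mpr hnorm.le) x hx, by simp [norm_smul, hnorm.ne']⟩
  have := hmin _ hunit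
  rw [hhom _ (inv_nonneg.mpr hnorm.le), inv_mul_eq_div, le_div_iff₀ hnorm] at this
  linarith

theorem exists_pos_mul_norm_le_norm_add_of_salient
    {W : Type*} [NormedAddCommGroup W] [NormedSpace ℝ W] [FiniteDimensional ℝ W]
    {C : Set W} (hclosed : IsClosed C) (hsmul : ∀ c : ℝ, 0 ≤ c → ∀ x ∈ C, c • x ∈ C)
    (hsalient : C ∩ (-C) = {0}) :
    ∃ c > 0, ∀ y ∈ C, ∀ z ∈ C, c * ‖y‖ ≤ ‖y + z‖ := by
  have hpos : ∀ p ∈ C ×ˢ C, p ≠ 0 → 0 < ‖p.1 + p.2‖ := by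
    rintro ⟨y, z⟩ ⟨hy, hz⟩ hp
    refine norm_pos_iff.mpr fun hyz => hp ?_
    have hy0 : y ∈ C ∩ (-C) := ⟨hy, by rwa [Set.mem_neg, neg_eq_of_add_eq_zero_right hyz]⟩
    rw [hsalient, Set.mem_singleton_iff] at hy0
    subst hy0
    simpa [Prod.ext_iff] using hyz
  obtain ⟨m, hm, hbound⟩ := exists_pos_mul_norm_le_of_isClosed_of_smul_mem (hclosed.prod hclosed)
    (fun c hc p hp => ⟨hsmul c hc _ hp.1, hsmul c hc _ hp.2⟩) (by fun_prop)
    (fun c hc p => by simp [← smul_add, norm_smul, abs_of_nonneg hc]) hpos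
  refine ⟨m, hm, fun y hy z hz => ?_⟩
  calc m * ‖y‖ ≤ m * ‖(y, z)‖ := by gcongr; exact norm_fst_le (y, z)
    _ ≤ ‖y + z‖ := hbound (y, z) ⟨hy, hz⟩

theorem opNorm_le_of_closedBall_subset_of_mapsTo
    {E F : Type*} [NormedAddCommGroup E] [NormedSpace ℝ E] [NormedAddCommGroup F]
    [NormedSpace ℝ F] {C : Set E} {D : Set F} {c : ℝ} (hc : 0 < c)
    (hD : ∀ y ∈ D, ∀ z ∈ D, c * ‖y‖ ≤ ‖y + z‖) (L : E →L[ℝ] F) (hL : MapsTo L C D)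
    {u : E} {ε : ℝ} (hε : 0 < ε) (hball : closedBall u ε ⊆ C) :
    ‖L‖ ≤ (2 / c + 1) / ε * ‖L u‖ := by
  refine L.opNorm_le_of_unit_norm (by positivity) fun x hx => ?_
  have hmem : ∀ v : E, ‖v‖ = ε → L (u + v) ∈ D := fun v hv =>
    hL (hball (by rw [mem_closedBall, dist_eq_norm, add_sub_cancel_left, hv]))
  have hεx : ‖ε • x‖ = ε := by simp [norm_smul, hx, hε.le]
  have hsum : L (u + ε • x) + L (u + -(ε • x)) = (2 : ℝ) • L u := by
    rw [← map_add, ← map_smul]; congr 1; module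
  have hkey : c * ‖L (u + ε • x)‖ ≤ 2 * ‖L u‖ := by
    have := hD _ (hmem _ hεx) _ (hmem _ (by rw [norm_neg, hεx]))
    rwa [hsum, norm_smul, Real.norm_two] at this
  have hfirst : ‖L (u + ε • x)‖ ≤ 2 / c * ‖L u‖ := by
    rw [div_mul_eq_mul_div, le_div_iff₀ hc]; linarith
  have hscaled : ε * ‖L x‖ ≤ (2 / c + 1) * ‖L u‖ :=
    calc ε * ‖L x‖ = ‖L (u + ε • x) - L u‖ := by
          rw [map_add, add_sub_cancel_left, map_smul, norm_smul, Real.norm_of_nonneg hε.le]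
      _ ≤ ‖L (u + ε • x)‖ + ‖L u‖ := norm_sub_le _ _
      _ ≤ (2 / c + 1) * ‖L u‖ := by linarith
  rw [div_mul_eq_mul_div, le_div_iff₀ hε]
  linarith

theorem birkhoff_norm_comparison_general
    {W : Type*} [NormedAddCommGroup W] [NormedSpace ℝ W] [FiniteDimensional ℝ W]
    (C : Set W)
    (hsmul : ∀ (c : ℝ), 0 ≤ c → ∀ x ∈ C, c • x ∈ C)
    (hclosed : IsClosed C)
    (hsalient : C ∩ (-C) = {0})
    (T : W →L[ℝ] W) (hT : ∀ x ∈ C, T x ∈ C)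
    (u : W) (hu : u ∈ interior C) :
    ∃ A : ℝ, 1 ≤ A ∧ ∀ n : ℕ,
      A⁻¹ * ‖(T ^ n) u‖ ≤ ‖T ^ n‖ ∧ ‖T ^ n‖ ≤ A * ‖(T ^ n) u‖ := by
  obtain ⟨c, hc, hnormal⟩ := exists_pos_mul_norm_le_norm_add_of_salient hclosed hsmul hsalient
  obtain ⟨ε, hε, hball⟩ := nhds_basis_closedBall.mem_iff.mp (mem_interior_iff_mem_nhds.mp hu)
  have hupper (n : ℕ) : ‖T ^ n‖ ≤ (2 / c + 1) / ε * ‖(T ^ n) u‖ :=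
    opNorm_le_of_closedBall_subset_of_mapsTo hc hnormal (T ^ n)
      (by rw [FunLike.coe_pow_eq_iterate]; exact MapsTo.iterate hT n) hε hball
  set A := max (max 1 ‖u‖) ((2 / c + 1) / ε)
  have hA1 : 1 ≤ A := le_max_of_le_left (le_max_left _ _)
  refine ⟨A, hA1, fun n => ⟨?_, (hupper n).trans (by gcongr; exact le_max_right _ _)⟩⟩
  rw [inv_mul_le_iff₀ (by positivity)]
  calc ‖(T ^ n) u‖ ≤ ‖T ^ n‖ * ‖u‖ := (T ^ n).le_opNorm u
    _ ≤ ‖T ^ n‖ * A := by gcongr; exact le_max_of_le_left (le_max_right _ _)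
    _ = A * ‖T ^ n‖ := mul_comm _ _

/-- **Birkhoff–Perron–Frobenius comparison.** Let `W` be a finite-dimensional
real normed vector space, `C ⊆ W` a closed, salient convex cone with nonempty interior,
`T` a (continuous) linear map with `T(C) ⊆ C`, and `u` an interior point of `C`.  Then
there is `A ≥ 1` with `A⁻¹ * ‖Tⁿ u‖ ≤ ‖Tⁿ‖ ≤ A * ‖Tⁿ u‖` for all `n`. -/
theorem birkhoff_norm_comparison
    {W : Type*} [NormedAddCommGroup W] [NormedSpace ℝ W] [FiniteDimensional ℝ W]
    (C : Set W)
    (hadd : ∀ x ∈ C, ∀ y ∈ C, x + y ∈ C)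
    (hsmul : ∀ (c : ℝ), 0 ≤ c → ∀ x ∈ C, c • x ∈ C)
    (hclosed : IsClosed C)
    (hsalient : C ∩ (-C) = {0})
    (T : W →L[ℝ] W) (hT : ∀ x ∈ C, T x ∈ C)
    (u : W) (hu : u ∈ interior C) :
    ∃ A : ℝ, 1 ≤ A ∧ ∀ n : ℕ,
      A⁻¹ * ‖(T ^ n) u‖ ≤ ‖T ^ n‖ ∧ ‖T ^ n‖ ≤ A * ‖(T ^ n) u‖ :=
  birkhoff_norm_comparison_general C hsmul hclosed hsalient T hT u hu
end

section
/- Let W be a nonzero finite-dimensional real normed vector space and T : W → W a linear map such that every eigenvalue of the complexification of T has modulus at most 1 and at least one eigenvalue has modulus exactly 1. Then there exist a natural number d and constants 0 < c₁ ≤ c₂ such that c₁ · n^d ≤ ‖Tⁿ‖ ≤ c₂ · n^d for all n ≥ 1, where ‖Tⁿ‖ is the operator norm. -/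
/-!
If `(f - μ)^(k+1) x = 0`, the binomial theorem gives
`fⁿ x = ∑_{j ≤ k} C(n, j) μ^(n-j) (f - μ)^j x`. Hence the orbit of `x` tends to `0` when `‖μ‖ < 1`,
is `O(n^k)` when `‖μ‖ = 1`, and is `Θ(n^k)` when moreover `(f - μ)^k x ≠ 0`, because
`C(n, k) = Θ(n^k)`. Over `ℂ` the generalized eigenspaces span, so with `d + 1` the largest size
of a Jordan block for an eigenvalue of modulus `1`, every orbit, hence `‖fⁿ‖`, is `O(n^d)`, while
the orbit of a vector at the top of such a block gives `n^d = O(‖fⁿ‖)`. A real `T` is reduced to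
its complexification by an injective algebra map between finite-dimensional spaces, which
preserves `Θ`-classes of norms.
-/

open Asymptotics Filter Finset Function Module Topology TensorProduct

namespace Module.End

variable {R M : Type*} [CommRing R] [AddCommGroup M] [Module R M]

theorem pow_apply_eq_sum_of_pow_sub_smul_apply_eq_zero {f : End R M} {μ : R} {x : M} {k : ℕ}
    (hx : ((f - μ • 1) ^ (k + 1)) x = 0) (n : ℕ) :
    (f ^ n) x = ∑ j ∈ range (k + 1), ((n.choose j : R) * μ ^ (n - j)) • ((f - μ • 1) ^ j) x := by
  set N := f - μ • 1
  have hcomm : Commute N (μ • 1) := (Commute.one_right _).smul_right μ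
  have hvanish : ∀ j, k + 1 ≤ j → (N ^ j) x = 0 := fun j hj => pow_map_zero_of_le hj hx
  calc (f ^ n) x = ((N + μ • 1) ^ n) x := by rw [sub_add_cancel]
    _ = ∑ j ∈ range (n + 1), ((n.choose j : R) * μ ^ (n - j)) • (N ^ j) x := by
      rw [hcomm.add_pow, LinearMap.sum_apply]
      refine sum_congr rfl fun j _ => ?_
      simp [smul_pow, mul_smul, mul_apply, smul_comm (μ ^ (n - j)), Nat.cast_smul_eq_nsmul]
    _ = ∑ j ∈ range (n + k + 1), ((n.choose j : R) * μ ^ (n - j)) • (N ^ j) x :=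
      sum_subset (range_subset_range.2 (by omega)) fun j _ hj => by
        simp [Nat.choose_eq_zero_of_lt (by simpa using hj : n < j)]
    _ = _ := (sum_subset (range_subset_range.2 (by omega)) fun j _ hj => by
        simp [hvanish j (by simpa using hj)]).symm

end Module.End

theorem isBigO_natCast_pow_pow {j k : ℕ} (hjk : j ≤ k) :
    (fun n : ℕ => (n : ℝ) ^ j) =O[atTop] fun n => (n : ℝ) ^ k :=
  IsBigO.of_bound 1 <| (eventually_ge_atTop 1).mono fun n hn => by
    have hn' : (1 : ℝ) ≤ n := by exact_mod_cast hn
    simpa [abs_of_nonneg (by positivity : (0 : ℝ) ≤ (n : ℝ) ^ j)] using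
      pow_le_pow_right₀ hn' hjk

section Growth

variable {𝕜 E : Type*} [RCLike 𝕜] [NormedAddCommGroup E] [NormedSpace 𝕜 E]

theorem isBigO_choose_mul_pow_sub_smul {μ : 𝕜} {r : ℝ} (hr : 0 < r) (hμ : ‖μ‖ ≤ r) (j : ℕ)
    (w : E) : (fun n : ℕ => ((n.choose j : 𝕜) * μ ^ (n - j)) • w) =O[atTop]
      fun n => (n : ℝ) ^ j * r ^ n := by
  refine IsBigO.of_bound ((r ^ j)⁻¹ * ‖w‖) (Eventually.of_forall fun n => ?_)
  rcases lt_or_ge n j with hnj | hjn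
  · simp only [Nat.choose_eq_zero_of_lt hnj, Nat.cast_zero, zero_mul, zero_smul, norm_zero]
    positivity
  have hpow : r ^ n = r ^ (n - j) * r ^ j := by rw [← pow_add, Nat.sub_add_cancel hjn]
  calc ‖((n.choose j : 𝕜) * μ ^ (n - j)) • w‖ = n.choose j * ‖μ‖ ^ (n - j) * ‖w‖ := by
        rw [norm_smul, norm_mul, RCLike.norm_natCast, norm_pow]
    _ ≤ (n : ℝ) ^ j * r ^ (n - j) * ‖w‖ := by
        gcongr
        exact_mod_cast Nat.choose_le_pow n j
    _ = (r ^ j)⁻¹ * ‖w‖ * ‖(n : ℝ) ^ j * r ^ n‖ := by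
        rw [Real.norm_of_nonneg (by positivity), hpow]
        field_simp

variable {f : Module.End 𝕜 E} {μ : 𝕜} {x : E} {k : ℕ}

theorem isBigO_pow_apply_of_pow_sub_smul_apply_eq_zero (hx : ((f - μ • 1) ^ (k + 1)) x = 0)
    {r : ℝ} (hr : 0 < r) (hμ : ‖μ‖ ≤ r) :
    (fun n : ℕ => (f ^ n) x) =O[atTop] fun n => (n : ℝ) ^ k * r ^ n := by
  simp_rw [Module.End.pow_apply_eq_sum_of_pow_sub_smul_apply_eq_zero hx]
  refine IsBigO.fun_sum fun j hj => ?_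
  exact (isBigO_choose_mul_pow_sub_smul hr hμ j _).trans
    ((isBigO_natCast_pow_pow (Nat.lt_succ_iff.1 (mem_range.1 hj))).mul (isBigO_refl _ _))

theorem isTheta_pow_apply_of_pow_sub_smul_apply_eq_zero (hx : ((f - μ • 1) ^ (k + 1)) x = 0)
    (hxk : ((f - μ • 1) ^ k) x ≠ 0) (hμ : ‖μ‖ = 1) :
    (fun n : ℕ => (f ^ n) x) =Θ[atTop] fun n => (n : ℝ) ^ k := by
  simp_rw [Module.End.pow_apply_eq_sum_of_pow_sub_smul_apply_eq_zero hx, sum_range_succ]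
  have hlower : (fun n : ℕ => ∑ j ∈ range k,
      ((n.choose j : 𝕜) * μ ^ (n - j)) • ((f - μ • 1) ^ j) x) =o[atTop] fun n => (n : ℝ) ^ k :=
    IsLittleO.fun_sum fun j hj => by
      have hterm := isBigO_choose_mul_pow_sub_smul one_pos hμ.le j (((f - μ • 1) ^ j) x)
      simp only [one_pow, mul_one] at hterm
      exact hterm.trans_isLittleO ((isLittleO_pow_pow_atTop_of_lt (mem_range.1 hj)).comp_tendsto
          tendsto_natCast_atTop_atTop)
  have hleading : (fun n : ℕ => ((n.choose k : 𝕜) * μ ^ (n - k)) • ((f - μ • 1) ^ k) x)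
      =Θ[atTop] fun n => (n : ℝ) ^ k := by
    have hchoose := (isTheta_const_mul_left (norm_ne_zero_iff.2 hxk)).2 (isTheta_choose k)
    refine (IsTheta.of_norm_eventuallyEq (Eventually.of_forall fun n => ?_)).trans hchoose
    simp [norm_smul, hμ, mul_comm]
  exact hlower.add_isTheta hleading

theorem tendsto_pow_apply_of_pow_sub_smul_apply_eq_zero (hx : ((f - μ • 1) ^ (k + 1)) x = 0)
    (hμ : ‖μ‖ < 1) : Tendsto (fun n : ℕ => (f ^ n) x) atTop (𝓝 0) := by
  have hr : 0 < (1 + ‖μ‖) / 2 := by positivity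
  refine (isBigO_pow_apply_of_pow_sub_smul_apply_eq_zero hx hr (by linarith)).trans_tendsto ?_
  exact tendsto_pow_const_mul_const_pow_of_lt_one k hr.le (by linarith)

end Growth

section FiniteDimensional

variable {𝕜 E F : Type*} [NontriviallyNormedField 𝕜] [CompleteSpace 𝕜]
  [NormedAddCommGroup E] [NormedSpace 𝕜 E] [FiniteDimensional 𝕜 E]
  [NormedAddCommGroup F] [NormedSpace 𝕜 F] {α : Type*} {l : Filter α}

theorem ContinuousLinearMap.isBigO_of_forall_isBigO_apply {G : Type*} [Norm G]
    {A : α → E →L[𝕜] F} {g : α → G} (h : ∀ x, (fun a => A a x) =O[l] g) : A =O[l] g := by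
  set b := Module.finBasis 𝕜 E
  have hsum : (fun a => ∑ i, ‖A a (b i)‖) =O[l] g :=
    IsBigO.fun_sum fun i _ => (h (b i)).norm_left
  refine (IsBigO.of_bound (Fintype.card (Fin (finrank 𝕜 E)) • ‖b.equivFunL.toContinuousLinearMap‖)
    (Eventually.of_forall fun a => ?_)).trans hsum
  rw [Real.norm_of_nonneg (sum_nonneg fun i _ => norm_nonneg _)]
  exact b.opNorm_le (sum_nonneg fun i _ => norm_nonneg _)
    fun i => single_le_sum (fun j _ => norm_nonneg (A a (b j))) (mem_univ i)

theorem LinearMap.isTheta_comp_of_injective {φ : E →ₗ[𝕜] F} (hφ : Injective φ) (u : α → E) :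
    (fun a => φ (u a)) =Θ[l] u := by
  obtain ⟨K, -, hK⟩ := φ.exists_antilipschitzWith (LinearMap.ker_eq_bot.2 hφ)
  exact ⟨(LinearMap.toContinuousLinearMap φ).isBigO_comp u l,
    IsBigO.of_bound K (Eventually.of_forall fun a => hK.le_mul_norm (map_zero φ) (u a))⟩

end FiniteDimensional

theorem exists_bounds_of_isTheta_natCast_pow {E : Type*} [NormedAddCommGroup E] {u : ℕ → E}
    {d : ℕ} (h : u =Θ[atTop] fun n => (n : ℝ) ^ d) (hu : ∀ n, u n ≠ 0) :
    ∃ c₁ c₂ : ℝ, 0 < c₁ ∧ c₁ ≤ c₂ ∧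
      ∀ n : ℕ, 1 ≤ n → c₁ * (n : ℝ) ^ d ≤ ‖u n‖ ∧ ‖u n‖ ≤ c₂ * (n : ℝ) ^ d := by
  obtain ⟨C, hC⟩ := (isBigO_nat_atTop_iff fun n h => absurd h (hu n)).1 h.2
  -- `n ^ d` vanishes at `n = 0` when `d > 0`, so the upper bound is read off the shifted sequence.
  obtain ⟨C', hC'⟩ := (isBigO_nat_atTop_iff (g := fun n : ℕ => ((n + 1 : ℕ) : ℝ) ^ d)
    fun n h => absurd h (by positivity)).1 (h.1.comp_tendsto (tendsto_add_atTop_nat 1))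
  have hC_pos : 0 < C := by
    have := hC 1
    simp only [Nat.cast_one, one_pow, norm_one] at this
    exact pos_of_mul_pos_left (one_pos.trans_le this) (norm_nonneg _)
  refine ⟨C⁻¹, max C' C⁻¹, inv_pos.2 hC_pos, le_max_right _ _, fun n hn => ⟨?_, ?_⟩⟩
  · have := hC n
    rw [Real.norm_of_nonneg (by positivity)] at this
    rw [inv_mul_le_iff₀ hC_pos]
    exact this
  · obtain ⟨m, rfl⟩ := Nat.exists_eq_add_of_le' hn
    have := hC' m
    rw [Real.norm_of_nonneg (by positivity)] at this
    exact this.trans (by gcongr; exact le_max_left _ _)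

namespace Module.End

variable {K V : Type*} [Field K] [AddCommGroup V] [Module K V]

theorem hasEigenvalue_conj_iff [FiniteDimensional K V] {V' : Type*} [AddCommGroup V']
    [Module K V'] [FiniteDimensional K V'] (e : V ≃ₗ[K] V') (f : End K V) (μ : K) :
    (e.conj f).HasEigenvalue μ ↔ f.HasEigenvalue μ := by
  rw [hasEigenvalue_iff_isRoot_charpoly, hasEigenvalue_iff_isRoot_charpoly, e.charpoly_conj]

theorem pow_ne_zero_of_hasEigenvalue {f : End K V} {μ : K} (hμ : f.HasEigenvalue μ) (hμ₀ : μ ≠ 0)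
    (n : ℕ) : f ^ n ≠ 0 := by
  obtain ⟨v, hv⟩ := hμ.exists_hasEigenvector
  intro h
  have := hv.pow_apply n
  rw [h, LinearMap.zero_apply] at this
  exact smul_ne_zero (pow_ne_zero n hμ₀) hv.2 this.symm

theorem hasEigenvalue_of_mem_maxGenEigenspace {f : End K V} {μ : K} {x : V}
    (hx : x ∈ f.maxGenEigenspace μ) (hx₀ : x ≠ 0) : f.HasEigenvalue μ :=
  HasUnifEigenvalue.lt zero_lt_one ((Submodule.ne_bot_iff _).2 ⟨x, hx, hx₀⟩)

/-- `d + 1` is the largest size of a Jordan block of `f` with eigenvalue in `S`. -/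
theorem exists_attained_uniform_maxGenEigenspace_index [FiniteDimensional K V] (f : End K V)
    {S : Set K} (hS : ∃ μ ∈ S, f.HasEigenvalue μ) :
    ∃ d : ℕ, (∃ μ ∈ S, ∃ v, ((f - μ • 1) ^ (d + 1)) v = 0 ∧ ((f - μ • 1) ^ d) v ≠ 0) ∧
      ∀ μ ∈ S, ∀ x ∈ f.maxGenEigenspace μ, ((f - μ • 1) ^ (d + 1)) x = 0 := by
  classical
  set P : ℕ → Prop := fun k => ∃ μ ∈ S, ∃ v ∈ f.maxGenEigenspace μ, ((f - μ • 1) ^ k) v ≠ 0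
  have hP₀ : P 0 := by
    obtain ⟨μ, hμS, hμ⟩ := hS
    obtain ⟨v, hv⟩ := hμ.exists_hasEigenvector
    exact ⟨μ, hμS, v, eigenspace_le_maxGenEigenspace hv.1, by simpa using hv.2⟩
  have hP_lt : ∀ k, P k → k < finrank K V := by
    rintro k ⟨μ, -, v, hv, hkv⟩
    rw [maxGenEigenspace_eq_genEigenspace_finrank, mem_genEigenspace_nat, LinearMap.mem_ker] at hv
    by_contra hk
    exact hkv (pow_map_zero_of_le (not_lt.1 hk) hv)
  set d := Nat.findGreatest P (finrank K V)
  have hPd : P d := Nat.findGreatest_spec (Nat.zero_le _) hP₀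
  have hPd_succ : ¬ P (d + 1) := fun h =>
    Nat.findGreatest_is_greatest (Nat.lt_succ_self d) (hP_lt _ h).le h
  refine ⟨d, ?_, fun μ hμ x hx => not_not.1 fun h => hPd_succ ⟨μ, hμ, x, hx, h⟩⟩
  obtain ⟨μ, hμ, v, hv, hdv⟩ := hPd
  exact ⟨μ, hμ, v, not_not.1 fun h => hPd_succ ⟨μ, hμ, v, hv, h⟩, hdv⟩

end Module.End

theorem ContinuousLinearMap.exists_isTheta_pow_natCast_pow {V : Type*} [NormedAddCommGroup V]
    [NormedSpace ℂ V] [FiniteDimensional ℂ V] (f : V →L[ℂ] V)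
    (hle : ∀ μ : ℂ, Module.End.HasEigenvalue (f : V →ₗ[ℂ] V) μ → ‖μ‖ ≤ 1)
    (hone : ∃ μ : ℂ, Module.End.HasEigenvalue (f : V →ₗ[ℂ] V) μ ∧ ‖μ‖ = 1) :
    ∃ d : ℕ, (fun n : ℕ => f ^ n) =Θ[atTop] fun n => (n : ℝ) ^ d := by
  set g : Module.End ℂ V := (f : V →ₗ[ℂ] V)
  have hpow_apply : ∀ n x, (f ^ n) x = (g ^ n) x := fun n x => by
    rw [← ContinuousLinearMap.toLinearMap_pow]; rfl
  obtain ⟨d, ⟨μ₀, hμ₀, v, hv, hdv⟩, hindex⟩ :=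
    g.exists_attained_uniform_maxGenEigenspace_index (S := {μ | ‖μ‖ = 1})
      (hone.imp fun μ h => ⟨h.2, h.1⟩)
  have horbit : ∀ μ, ∀ x ∈ g.maxGenEigenspace μ,
      (fun n : ℕ => (g ^ n) x) =O[atTop] fun n => (n : ℝ) ^ d := by
    intro μ x hx
    rcases eq_or_ne x 0 with rfl | hx₀
    · simpa using isBigO_zero _ _
    rcases (hle μ (Module.End.hasEigenvalue_of_mem_maxGenEigenspace hx hx₀)).lt_or_eq with hμ | hμ
    · rw [Module.End.maxGenEigenspace_eq_genEigenspace_finrank, Module.End.mem_genEigenspace_nat,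
        LinearMap.mem_ker] at hx
      have hx' := Module.End.pow_map_zero_of_le (Nat.le_succ _) hx
      refine (tendsto_pow_apply_of_pow_sub_smul_apply_eq_zero hx' hμ).isBigO_one ℝ |>.trans ?_
      simpa using isBigO_natCast_pow_pow (Nat.zero_le d)
    · simpa using isBigO_pow_apply_of_pow_sub_smul_apply_eq_zero (hindex μ hμ x hx) one_pos hμ.le
  refine ⟨d, ContinuousLinearMap.isBigO_of_forall_isBigO_apply fun x => ?_, ?_⟩
  · have hx : x ∈ ⨆ μ, g.maxGenEigenspace μ := by
      rw [Module.End.iSup_maxGenEigenspace_eq_top]; trivial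
    simp_rw [hpow_apply]
    refine Submodule.iSup_induction _ (motive := fun x =>
      (fun n : ℕ => (g ^ n) x) =O[atTop] fun n => (n : ℝ) ^ d) hx horbit ?_ ?_
    · simpa using isBigO_zero _ _
    · intro y z hy hz
      simpa only [map_add] using hy.add hz
  · have hΘ := isTheta_pow_apply_of_pow_sub_smul_apply_eq_zero hv hdv hμ₀
    simp_rw [← hpow_apply] at hΘ
    exact hΘ.symm.isBigO.trans ((ContinuousLinearMap.apply ℂ V v).isBigO_comp _ _)

/-- `ℂ ⊗[ℝ] W` carries no norm, so the complexification is transported to `Fin m → ℂ`. -/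
theorem exists_injective_algHom_complexification (W : Type*) [NormedAddCommGroup W]
    [NormedSpace ℝ W] [FiniteDimensional ℝ W] :
    ∃ (m : ℕ) (ψ : (W →L[ℝ] W) →ₐ[ℝ] ((Fin m → ℂ) →L[ℂ] (Fin m → ℂ))), Injective ψ ∧
      ∀ (T : W →L[ℝ] W) (μ : ℂ), Module.End.HasEigenvalue (ψ T : (Fin m → ℂ) →ₗ[ℂ] _) μ ↔
        Module.End.HasEigenvalue (LinearMap.baseChange ℂ (T : W →ₗ[ℝ] W)) μ := by
  set e := (Module.finBasis ℂ (ℂ ⊗[ℝ] W)).equivFun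
  refine ⟨_, ((Module.End.toContinuousLinearMap _).restrictScalars ℝ).toAlgHom.comp
    ((e.conjAlgEquiv ℝ).toAlgHom.comp ((Module.End.baseChangeHom ℝ ℂ W).comp
      (Module.End.toContinuousLinearMap W).symm.toAlgHom)), ?_, fun T μ => ?_⟩
  · simp only [AlgHom.coe_comp, AlgEquiv.coe_toAlgHom]
    exact (AlgEquiv.injective _).comp <| (AlgEquiv.injective _).comp <|
      (LinearMap.baseChangeHom_injective ℝ W ℂ).comp (AlgEquiv.injective _)
  · exact Module.End.hasEigenvalue_conj_iff e _ μ

theorem polynomial_growth_of_spectral_radius_one_general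
    {W : Type*} [NormedAddCommGroup W] [NormedSpace ℝ W] [FiniteDimensional ℝ W]
    (T : W →L[ℝ] W)
    (hle : ∀ μ : ℂ,
      Module.End.HasEigenvalue (LinearMap.baseChange ℂ (T : W →ₗ[ℝ] W)) μ →
        ‖μ‖ ≤ 1)
    (hone : ∃ μ : ℂ,
      Module.End.HasEigenvalue (LinearMap.baseChange ℂ (T : W →ₗ[ℝ] W)) μ ∧
        ‖μ‖ = 1) :
    ∃ (d : ℕ) (c₁ c₂ : ℝ), 0 < c₁ ∧ c₁ ≤ c₂ ∧
      ∀ n : ℕ, 1 ≤ n →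
        c₁ * (n : ℝ) ^ d ≤ ‖T ^ n‖ ∧ ‖T ^ n‖ ≤ c₂ * (n : ℝ) ^ d := by
  obtain ⟨m, ψ, hψ, hψ_eig⟩ := exists_injective_algHom_complexification W
  obtain ⟨d, hΘ⟩ := (ψ T).exists_isTheta_pow_natCast_pow
    (fun μ hμ => hle μ ((hψ_eig T μ).1 hμ)) (hone.imp fun μ hμ => ⟨(hψ_eig T μ).2 hμ.1, hμ.2⟩)
  have hT : (fun n : ℕ => T ^ n) =Θ[atTop] fun n => (n : ℝ) ^ d := by
    refine (ψ.toLinearMap.isTheta_comp_of_injective hψ _).symm.trans ?_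
    simpa only [AlgHom.toLinearMap_apply, map_pow] using hΘ
  have hT_ne : ∀ n, T ^ n ≠ 0 := by
    obtain ⟨μ, hμ, hμ₁⟩ := hone
    intro n hn
    refine Module.End.pow_ne_zero_of_hasEigenvalue hμ (by rintro rfl; simp at hμ₁) n ?_
    rw [← LinearMap.baseChange_pow, ← ContinuousLinearMap.toLinearMap_pow, hn]
    simp
  exact ⟨d, exists_bounds_of_isTheta_natCast_pow hT hT_ne⟩

/-- Let `W` be a nonzero finite-dimensional real normed vector space and
`T : W → W` a (continuous) linear map all of whose complexified eigenvalues have modulus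
at most `1`, at least one of them having modulus exactly `1`.  Then there are `d : ℕ` and
constants `0 < c₁ ≤ c₂` such that `c₁ * n^d ≤ ‖Tⁿ‖ ≤ c₂ * n^d` for all `n ≥ 1`. -/
theorem polynomial_growth_of_spectral_radius_one
    {W : Type*} [NormedAddCommGroup W] [NormedSpace ℝ W] [FiniteDimensional ℝ W]
    [Nontrivial W]
    (T : W →L[ℝ] W)
    (hle : ∀ μ : ℂ,
      Module.End.HasEigenvalue (LinearMap.baseChange ℂ (T : W →ₗ[ℝ] W)) μ →
        ‖μ‖ ≤ 1)
    (hone : ∃ μ : ℂ,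
      Module.End.HasEigenvalue (LinearMap.baseChange ℂ (T : W →ₗ[ℝ] W)) μ ∧
        ‖μ‖ = 1) :
    ∃ (d : ℕ) (c₁ c₂ : ℝ), 0 < c₁ ∧ c₁ ≤ c₂ ∧
      ∀ n : ℕ, 1 ≤ n →
        c₁ * (n : ℝ) ^ d ≤ ‖T ^ n‖ ∧ ‖T ^ n‖ ≤ c₂ * (n : ℝ) ^ d :=
  polynomial_growth_of_spectral_radius_one_general T hle hone
end

section
/- Let U ⊂ ℝ^m be a bounded open set and let a, t : U → ℝ^m be continuously differentiable maps whose differentials are bounded on U. For n ∈ ℕ and u ∈ U set Jₙ(u) = Da(u) + n · Dt(u), an m × m real matrix. Then ∫_U √(det(Iₘ + Jₙ(u)ᵀ Jₙ(u))) du = O(n^m) as n → ∞; and if moreover det(Dt(u)) = 0 for every u ∈ U, then ∫_U √(det(Iₘ + Jₙ(u)ᵀ Jₙ(u))) du = O(n^{m−1}). -/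
open MeasureTheory Module Matrix

/-!
Since `U` has finite measure, it suffices to bound the integrand pointwise. By the
Weinstein–Aronszajn identity, `det (1 + Jᵀ J)` is the determinant of the `2m × 2m` block matrix
`P = [[1, -Jᵀ], [J, 1]]`, whose entries are `O(n)` when `J = Da + n • Dt`; the Leibniz expansion
then gives `det (1 + Jᵀ J) = O(n^{2m})`. If `Dt` is singular, take `v ∈ ker Dt` and
`w ∈ ker Dtᵀ` with sup-norm `1` and some coordinate equal to `1`. Replacing one column of `P` by
`P (v, 0) = (v, Da v)` and another by `P (0, w) = (-Daᵀ w, w)` does not change the determinant,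
and these two columns are bounded independently of `n`, which gains a factor `n²`.
-/

/-- The Jacobian matrix of a map `f : ℝ^m → ℝ^m` at a point `u`. -/
noncomputable def jacobianMatrix {m : ℕ} (f : (Fin m → ℝ) → (Fin m → ℝ))
    (u : Fin m → ℝ) : Matrix (Fin m) (Fin m) ℝ :=
  LinearMap.toMatrix' (fderiv ℝ f u : (Fin m → ℝ) →ₗ[ℝ] (Fin m → ℝ))

namespace Matrix

variable {m n R : Type*}

section CommRing

variable [CommRing R] [Fintype n] [DecidableEq n]

theorem det_updateCol_mulVec (M : Matrix n n R) (j : n) (x : n → R) :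
    (M.updateCol j (M *ᵥ x)).det = x j * M.det := by
  have : M *ᵥ x = fun k => ∑ i, x i • M k i := by
    ext k; simp [mulVec, dotProduct, mul_comm]
  rw [this, det_updateCol_sum, smul_eq_mul]

theorem updateCol_mulVec_of_apply_eq_zero (M : Matrix m n R) {j : n} {x : n → R}
    (hx : x j = 0) (c : m → R) : M.updateCol j c *ᵥ x = M *ᵥ x := by
  ext i
  refine Finset.sum_congr rfl fun k _ => ?_
  rcases eq_or_ne k j with rfl | hk
  · simp [hx]
  · simp only [updateCol_apply, if_neg hk]

theorem det_updateCol_mulVec_updateCol_mulVec (M : Matrix n n R) {j₁ j₂ : n} {x y : n → R}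
    (hy : y j₁ = 0) :
    ((M.updateCol j₁ (M *ᵥ x)).updateCol j₂ (M *ᵥ y)).det = y j₂ * (x j₁ * M.det) := by
  rw [← updateCol_mulVec_of_apply_eq_zero M hy (M *ᵥ x), det_updateCol_mulVec,
    det_updateCol_mulVec]

theorem det_one_add_transpose_mul [Fintype m] [DecidableEq m] (J : Matrix m n R) :
    (1 + Jᵀ * J).det = (fromBlocks 1 (-Jᵀ) J 1).det := by
  rw [det_fromBlocks_one₁₁, Matrix.mul_neg, sub_neg_eq_add, det_one_add_mul_comm]

end CommRing

section OrderedRing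

variable [CommRing R] [LinearOrder R] [IsStrictOrderedRing R]

theorem abs_one_apply_le [DecidableEq n] {e : R} (he : 1 ≤ e) (i j : n) :
    |(1 : Matrix n n R) i j| ≤ e := by
  rcases eq_or_ne i j with rfl | h
  · simpa using he
  · simpa [one_apply_ne h] using zero_le_one.trans he

theorem abs_fromBlocks_one_neg_transpose_le [DecidableEq m] [DecidableEq n] {J : Matrix m n R}
    {e : R} (hJ : ∀ i j, |J i j| ≤ e) (he : 1 ≤ e) (i j : n ⊕ m) :
    |fromBlocks 1 (-Jᵀ) J 1 i j| ≤ e := by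
  rcases i with i | i <;> rcases j with j | j <;> simp [abs_one_apply_le he, hJ]

theorem abs_add_smul_apply_le {A B : Matrix m n R} {M s : R} (hA : ∀ i j, |A i j| ≤ M)
    (hB : ∀ i j, |B i j| ≤ M) (hs : 1 ≤ s) (i : m) (j : n) :
    |(A + s • B) i j| ≤ 2 * M * s := by
  have hM : 0 ≤ M := (abs_nonneg _).trans (hA i j)
  calc |(A + s • B) i j| ≤ |A i j| + s * |B i j| := by
        simpa [abs_mul, abs_of_nonneg (zero_le_one.trans hs)] using abs_add_le (A i j) (s * B i j)
    _ ≤ M + s * M := by gcongr; exacts [hA i j, hB i j]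
    _ ≤ 2 * M * s := by nlinarith

theorem abs_mulVec_le [Fintype n] {A : Matrix m n R} {M : R} {v : n → R}
    (hA : ∀ i j, |A i j| ≤ M) (hv : ∀ j, |v j| ≤ 1) (i : m) :
    |(A *ᵥ v) i| ≤ Fintype.card n * M :=
  calc |(A *ᵥ v) i| ≤ ∑ j, |A i j * v j| := Finset.abs_sum_le_sum_abs _ _
    _ ≤ ∑ _j : n, M := by
      gcongr with j
      rw [abs_mul]
      nlinarith [hA i j, hv j, abs_nonneg (A i j), abs_nonneg (v j)]
    _ = _ := by simp

variable [Fintype n] [DecidableEq n]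

open Equiv Finset in
theorem abs_det_le_factorial_mul_prod {M : Matrix n n R} {b : n → R}
    (hb : ∀ i j, |M i j| ≤ b j) : |M.det| ≤ (Fintype.card n).factorial * ∏ j, b j :=
  calc |M.det| = |∑ σ : Perm n, Perm.sign σ • ∏ i, M (σ i) i| := by rw [det_apply]
    _ ≤ ∑ σ : Perm n, |Perm.sign σ • ∏ i, M (σ i) i| := abs_sum_le_sum_abs _ _
    _ = ∑ σ : Perm n, ∏ i, |M (σ i) i| := by
      refine sum_congr rfl fun σ _ => ?_
      rw [← abs_prod]
      rcases Int.units_eq_one_or (Perm.sign σ) with h | h <;> simp [h, Units.smul_def]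
    _ ≤ ∑ _σ : Perm n, ∏ j, b j := by gcongr with σ _ i; exact hb _ _
    _ = _ := by simp [Fintype.card_perm]

theorem abs_det_le_of_abs_le_of_mem {M : Matrix n n R} {S : Finset n} {c e : R}
    (hc : ∀ i, ∀ j ∈ S, |M i j| ≤ c) (he : ∀ i, ∀ j ∉ S, |M i j| ≤ e) :
    |M.det| ≤ (Fintype.card n).factorial * (c ^ S.card * e ^ (Fintype.card n - S.card)) := by
  have hprod : ∏ j, (if j ∈ S then c else e) = c ^ S.card * e ^ (Fintype.card n - S.card) := by
    rw [Finset.prod_ite, Finset.prod_const, Finset.prod_const, Finset.filter_mem_eq_inter,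
      Finset.univ_inter, Finset.filter_not, Finset.filter_mem_eq_inter, Finset.univ_inter,
      Finset.card_sdiff_of_subset (Finset.subset_univ S), Finset.card_univ]
  rw [← hprod]
  refine abs_det_le_factorial_mul_prod fun i j => ?_
  split_ifs with hj
  exacts [hc i j hj, he i j hj]

theorem det_one_add_transpose_mul_le [Fintype m] [DecidableEq m] {J : Matrix m n R}
    {e : R} (hJ : ∀ i j, |J i j| ≤ e) (he : 1 ≤ e) :
    (1 + Jᵀ * J).det ≤
      (Fintype.card n + Fintype.card m).factorial * e ^ (Fintype.card n + Fintype.card m) := by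
  rw [det_one_add_transpose_mul]
  refine (le_abs_self _).trans ?_
  simpa [Fintype.card_sum] using
    abs_det_le_factorial_mul_prod (b := fun _ => e) (abs_fromBlocks_one_neg_transpose_le hJ he)

theorem det_one_add_transpose_mul_le_of_mulVec_eq {J A : Matrix n n R} {v w : n → R} {k l : n}
    {M e : R} (hv : J *ᵥ v = A *ᵥ v) (hw : Jᵀ *ᵥ w = Aᵀ *ᵥ w) (hvk : v k = 1) (hwl : w l = 1)
    (hv1 : ∀ i, |v i| ≤ 1) (hw1 : ∀ i, |w i| ≤ 1) (hA : ∀ i j, |A i j| ≤ M)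
    (hJ : ∀ i j, |J i j| ≤ e) (he : 1 ≤ e) :
    (1 + Jᵀ * J).det ≤ (Fintype.card n + Fintype.card n).factorial *
      ((Fintype.card n * M + 1) ^ 2 * e ^ (Fintype.card n + Fintype.card n - 2)) := by
  set P := fromBlocks 1 (-Jᵀ) J 1
  set x : n ⊕ n → R := Sum.elim v 0
  set y : n ⊕ n → R := Sum.elim 0 w
  have hPx : P *ᵥ x = Sum.elim v (A *ᵥ v) := by simp [P, x, fromBlocks_mulVec, hv]
  have hPy : P *ᵥ y = Sum.elim (-(Aᵀ *ᵥ w)) w := by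
    simp [P, y, fromBlocks_mulVec, neg_mulVec, hw]
  set Q := (P.updateCol (.inl k) (P *ᵥ x)).updateCol (.inr l) (P *ᵥ y)
  have hQ : Q.det = P.det := by
    rw [det_updateCol_mulVec_updateCol_mulVec P (x := x) (y := y) rfl]
    simp [x, y, hvk, hwl]
  set c : R := Fintype.card n * M + 1
  have hc : 1 ≤ c :=
    le_add_of_nonneg_left (mul_nonneg (Nat.cast_nonneg _) ((abs_nonneg _).trans (hA k k)))
  have hPx_le : ∀ i, |(P *ᵥ x) i| ≤ c := by
    rw [hPx]
    rintro (i | i)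
    · exact (hv1 i).trans hc
    · simpa only [Sum.elim_inr] using
        (abs_mulVec_le hA hv1 i).trans (le_add_of_nonneg_right zero_le_one)
  have hPy_le : ∀ i, |(P *ᵥ y) i| ≤ c := by
    rw [hPy]
    rintro (i | i)
    · simpa only [Sum.elim_inl, Pi.neg_apply, abs_neg] using
        (abs_mulVec_le (A := Aᵀ) (fun i j => hA j i) hw1 i).trans
          (le_add_of_nonneg_right zero_le_one)
    · exact (hw1 i).trans hc
  have hkl : (Sum.inl k : n ⊕ n) ≠ .inr l := Sum.inl_ne_inr
  have hdetQ := abs_det_le_of_abs_le_of_mem (M := Q) (S := {.inl k, .inr l}) (c := c) (e := e)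
    (by
      intro i j hj
      simp only [Finset.mem_insert, Finset.mem_singleton] at hj
      rcases hj with rfl | rfl
      · simpa [Q, updateCol_apply, hkl] using hPx_le i
      · simpa [Q, updateCol_apply] using hPy_le i)
    (by
      intro i j hj
      simp only [Finset.mem_insert, Finset.mem_singleton, not_or] at hj
      simpa [Q, updateCol_apply, hj.1, hj.2] using
        abs_fromBlocks_one_neg_transpose_le hJ he i j)
  rw [Finset.card_pair hkl, Fintype.card_sum, hQ] at hdetQ
  rw [det_one_add_transpose_mul]
  exact (le_abs_self _).trans hdetQ

end OrderedRing

variable [Fintype n] [DecidableEq n]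

theorem exists_mulVec_eq_zero_of_det_eq_zero {K : Type*} [Field K] [LinearOrder K]
    [IsStrictOrderedRing K] {B : Matrix n n K} (hB : B.det = 0) :
    ∃ v k, B *ᵥ v = 0 ∧ v k = 1 ∧ ∀ i, |v i| ≤ 1 := by
  obtain ⟨v, hv0, hBv⟩ := exists_mulVec_eq_zero_iff.mpr hB
  obtain ⟨k, hk⟩ : ∃ k, v k ≠ 0 := Function.ne_iff.mp hv0
  obtain ⟨k, -, hmax⟩ :=
    Finset.exists_max_image Finset.univ (fun i => |v i|) ⟨k, Finset.mem_univ k⟩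
  have hk0 : v k ≠ 0 := abs_pos.mp ((abs_pos.mpr hk).trans_le (hmax _ (Finset.mem_univ _)))
  refine ⟨(v k)⁻¹ • v, k, by rw [mulVec_smul, hBv, smul_zero], inv_mul_cancel₀ hk0, fun i => ?_⟩
  rw [Pi.smul_apply, smul_eq_mul, abs_mul, abs_inv, inv_mul_le_one₀ (abs_pos.mpr hk0)]
  exact hmax i (Finset.mem_univ i)

theorem det_one_add_transpose_mul_le_of_det_eq_zero {K : Type*} [Field K] [LinearOrder K]
    [IsStrictOrderedRing K] {A B : Matrix n n K} {s M e : K} (hB : B.det = 0)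
    (hA : ∀ i j, |A i j| ≤ M) (hJ : ∀ i j, |(A + s • B) i j| ≤ e) (he : 1 ≤ e) :
    (1 + (A + s • B)ᵀ * (A + s • B)).det ≤ (Fintype.card n + Fintype.card n).factorial *
      ((Fintype.card n * M + 1) ^ 2 * e ^ (Fintype.card n + Fintype.card n - 2)) := by
  obtain ⟨v, k, hBv, hvk, hv1⟩ := exists_mulVec_eq_zero_of_det_eq_zero hB
  obtain ⟨w, l, hBw, hwl, hw1⟩ :=
    exists_mulVec_eq_zero_of_det_eq_zero (B := Bᵀ) (by rwa [det_transpose])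
  refine det_one_add_transpose_mul_le_of_mulVec_eq ?_ ?_ hvk hwl hv1 hw1 hA hJ he
  · rw [add_mulVec, smul_mulVec, hBv, smul_zero, add_zero]
  · rw [transpose_add, transpose_smul, add_mulVec, smul_mulVec, hBw, smul_zero, add_zero]

variable {A B : Matrix n n ℝ} {M s : ℝ}

theorem sqrt_det_one_add_transpose_mul_le (hA : ∀ i j, |A i j| ≤ M) (hB : ∀ i j, |B i j| ≤ M)
    (hM : 1 ≤ M) (hs : 1 ≤ s) :
    √(1 + (A + s • B)ᵀ * (A + s • B)).det ≤
      √((Fintype.card n + Fintype.card n).factorial) * (2 * M) ^ Fintype.card n *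
        s ^ Fintype.card n := by
  have hdet := det_one_add_transpose_mul_le (abs_add_smul_apply_le hA hB hs) (by nlinarith)
  rw [Real.sqrt_le_left (by positivity)]
  refine hdet.trans_eq ?_
  linear_combination (-(2 * M * s) ^ (Fintype.card n + Fintype.card n)) *
    Real.sq_sqrt (Nat.cast_nonneg (α := ℝ) (Fintype.card n + Fintype.card n).factorial)

theorem sqrt_det_one_add_transpose_mul_le_of_det_eq_zero (hA : ∀ i j, |A i j| ≤ M)
    (hB : ∀ i j, |B i j| ≤ M) (hdet : B.det = 0) (hM : 1 ≤ M) (hs : 1 ≤ s) :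
    √(1 + (A + s • B)ᵀ * (A + s • B)).det ≤
      √((Fintype.card n + Fintype.card n).factorial) * (Fintype.card n * M + 1) *
        (2 * M) ^ (Fintype.card n - 1) * s ^ (Fintype.card n - 1) := by
  have hbound := det_one_add_transpose_mul_le_of_det_eq_zero hdet hA
    (abs_add_smul_apply_le hA hB hs) (by nlinarith)
  rw [Real.sqrt_le_left (by positivity)]
  refine hbound.trans_eq ?_
  rw [show Fintype.card n + Fintype.card n - 2 = (Fintype.card n - 1) + (Fintype.card n - 1) by
    omega]
  linear_combination
    (-(Fintype.card n * M + 1) ^ 2 * (2 * M * s) ^ (Fintype.card n - 1 + (Fintype.card n - 1))) *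
      Real.sq_sqrt (Nat.cast_nonneg (α := ℝ) (Fintype.card n + Fintype.card n).factorial)

end Matrix

theorem ContinuousLinearMap.abs_toMatrix'_apply_le {m n : Type*} [Fintype m] [Fintype n]
    [DecidableEq n] (L : (n → ℝ) →L[ℝ] (m → ℝ)) (i : m) (j : n) :
    |LinearMap.toMatrix' (L : (n → ℝ) →ₗ[ℝ] (m → ℝ)) i j| ≤ ‖L‖ :=
  calc |LinearMap.toMatrix' (L : (n → ℝ) →ₗ[ℝ] (m → ℝ)) i j| = ‖L (Pi.single j 1) i‖ := by
        simp [LinearMap.toMatrix'_apply]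
    _ ≤ ‖L (Pi.single j 1)‖ := norm_le_pi_norm _ i
    _ ≤ ‖L‖ * ‖(Pi.single j 1 : n → ℝ)‖ := L.le_opNorm _
    _ = ‖L‖ := by rw [Pi.norm_single, norm_one, mul_one]

theorem MeasureTheory.exists_pos_forall_setIntegral_le_mul_pow {X : Type*} [MeasurableSpace X]
    {μ : Measure X} {U : Set X} (hU : μ U < ⊤) {f : ℕ → X → ℝ} {K : ℝ} (hK : 0 ≤ K) {p : ℕ}
    (hf : ∀ n : ℕ, 1 ≤ n → ∀ u ∈ U, ‖f n u‖ ≤ K * n ^ p) :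
    ∃ C : ℝ, 0 < C ∧ ∀ n : ℕ, 1 ≤ n → ∫ u in U, f n u ∂μ ≤ C * n ^ p := by
  refine ⟨K * μ.real U + 1, by positivity, fun n hn => ?_⟩
  have hnp : (1 : ℝ) ≤ n ^ p := one_le_pow₀ (by exact_mod_cast hn)
  calc ∫ u in U, f n u ∂μ ≤ ‖∫ u in U, f n u ∂μ‖ := Real.le_norm_self _
    _ ≤ K * n ^ p * μ.real U := norm_setIntegral_le_of_norm_le_const hU (hf n hn)
    _ ≤ (K * μ.real U + 1) * n ^ p := by nlinarith [measureReal_nonneg (μ := μ) (s := U)]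

theorem graph_volume_growth_general
    {m : ℕ} (U : Set (Fin m → ℝ)) (hUbdd : Bornology.IsBounded U)
    (a t : (Fin m → ℝ) → (Fin m → ℝ))
    (hbdd : ∃ M : ℝ, ∀ u ∈ U, ‖fderiv ℝ a u‖ ≤ M ∧ ‖fderiv ℝ t u‖ ≤ M) :
    (∃ C : ℝ, 0 < C ∧ ∀ n : ℕ, 1 ≤ n →
      (∫ u in U, Real.sqrt
          ((1 + (jacobianMatrix a u + (n : ℝ) • jacobianMatrix t u)ᵀ *
            (jacobianMatrix a u + (n : ℝ) • jacobianMatrix t u)).det))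
        ≤ C * (n : ℝ) ^ m) ∧
    ((∀ u ∈ U, (jacobianMatrix t u).det = 0) →
      ∃ C : ℝ, 0 < C ∧ ∀ n : ℕ, 1 ≤ n →
        (∫ u in U, Real.sqrt
            ((1 + (jacobianMatrix a u + (n : ℝ) • jacobianMatrix t u)ᵀ *
              (jacobianMatrix a u + (n : ℝ) • jacobianMatrix t u)).det))
          ≤ C * (n : ℝ) ^ (m - 1)) := by
  obtain ⟨M, hM⟩ := hbdd
  set M₁ := max M 1
  have hM₁ : 1 ≤ M₁ := le_max_right M 1
  have hDa : ∀ u ∈ U, ∀ i j, |jacobianMatrix a u i j| ≤ M₁ := fun u hu i j =>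
    ((fderiv ℝ a u).abs_toMatrix'_apply_le i j).trans ((hM u hu).1.trans (le_max_left M 1))
  have hDt : ∀ u ∈ U, ∀ i j, |jacobianMatrix t u i j| ≤ M₁ := fun u hu i j =>
    ((fderiv ℝ t u).abs_toMatrix'_apply_le i j).trans ((hM u hu).2.trans (le_max_left M 1))
  have hU := hUbdd.measure_lt_top (μ := volume)
  refine ⟨exists_pos_forall_setIntegral_le_mul_pow hU
      (K := √((m + m).factorial) * (2 * M₁) ^ m) (by positivity) fun n hn u hu => ?_,
    fun hdet => exists_pos_forall_setIntegral_le_mul_pow hU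
      (K := √((m + m).factorial) * (m * M₁ + 1) * (2 * M₁) ^ (m - 1)) (by positivity)
      fun n hn u hu => ?_⟩
  · rw [Real.norm_of_nonneg (Real.sqrt_nonneg _)]
    simpa using sqrt_det_one_add_transpose_mul_le (hDa u hu) (hDt u hu) hM₁
      (s := n) (by exact_mod_cast hn)
  · rw [Real.norm_of_nonneg (Real.sqrt_nonneg _)]
    simpa using sqrt_det_one_add_transpose_mul_le_of_det_eq_zero (hDa u hu) (hDt u hu)
      (hdet u hu) hM₁ (s := n) (by exact_mod_cast hn)

/-- Let `U ⊂ ℝ^m` be a bounded open set, `a, t : U → ℝ^m` maps of class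
`C¹` with bounded differentials on `U`, and set `Jₙ(u) = Da(u) + n·Dt(u)`.  Then the graph
volume `∫_U √(det(Iₘ + Jₙᵀ Jₙ))` is `O(n^m)`; if moreover `det(Dt(u)) = 0` for all `u ∈ U`
(the translation vector does not have maximal variation), it is `O(n^{m-1})`. -/
theorem graph_volume_growth
    {m : ℕ} (U : Set (Fin m → ℝ)) (hUopen : IsOpen U) (hUbdd : Bornology.IsBounded U)
    (a t : (Fin m → ℝ) → (Fin m → ℝ))
    (ha : ContDiffOn ℝ 1 a U) (ht : ContDiffOn ℝ 1 t U)
    (hbdd : ∃ M : ℝ, ∀ u ∈ U, ‖fderiv ℝ a u‖ ≤ M ∧ ‖fderiv ℝ t u‖ ≤ M) :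
    (∃ C : ℝ, 0 < C ∧ ∀ n : ℕ, 1 ≤ n →
      (∫ u in U, Real.sqrt
          ((1 + (jacobianMatrix a u + (n : ℝ) • jacobianMatrix t u)ᵀ *
            (jacobianMatrix a u + (n : ℝ) • jacobianMatrix t u)).det))
        ≤ C * (n : ℝ) ^ m) ∧
    ((∀ u ∈ U, (jacobianMatrix t u).det = 0) →
      ∃ C : ℝ, 0 < C ∧ ∀ n : ℕ, 1 ≤ n →
        (∫ u in U, Real.sqrt
            ((1 + (jacobianMatrix a u + (n : ℝ) • jacobianMatrix t u)ᵀ *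
              (jacobianMatrix a u + (n : ℝ) • jacobianMatrix t u)).det))
          ≤ C * (n : ℝ) ^ (m - 1)) :=
  graph_volume_growth_general U hUbdd a t hbdd
end
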